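/- arXiv:1108.1852 — 11 statements merged into one kernel-verified Lean document; each statement's English description precedes it below -/
import Mathlib

section
/- Let F be a finite field with q elements and let f ∈ F[X] be a non-constant polynomial. Then ⌊(q−1)/(deg f)⌋ + 1 ≤ |V_f| ≤ q, where V_f = {f(a) : a ∈ F} is the value set of f. -/
open Polynomial

/-- For a non-constant polynomial `f` over a finite field `F` with `q`
elements, the value set `V_f = {f(a) : a ∈ F}` satisfies
`⌊(q−1)/deg f⌋ + 1 ≤ |V_f| ≤ q`. -/
theorem stmt0 {F : Type*} [Field F] [Fintype F] [DecidableEq F] (q : ℕ)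
    (hq : Fintype.card F = q) (f : F[X]) (hf : 0 < f.natDegree) :
    (q - 1) / f.natDegree + 1 ≤ (Finset.univ.image fun a => f.eval a).card ∧
    (Finset.univ.image fun a => f.eval a).card ≤ q := by
  have hdeg : 0 < f.degree := natDegree_pos_iff_degree_pos.mp hf
  have hkey : Fintype.card F ≤ f.natDegree * (Finset.univ.image fun a => f.eval a).card := by
    simpa using FiniteField.card_image_polynomial_eval (R := F) hdeg
  have hV : 0 < (Finset.univ.image fun a => f.eval a).card := by
    apply Finset.card_pos.mpr
    exact ⟨f.eval 0, Finset.mem_image_of_mem _ (Finset.mem_univ 0)⟩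
  constructor
  · rw [Nat.add_one_le_iff, Nat.div_lt_iff_lt_mul hf]
    calc q - 1 < Fintype.card F := by
          rw [hq]; exact Nat.sub_lt (hq ▸ Fintype.card_pos) one_pos
      _ ≤ f.natDegree * (Finset.univ.image fun a => f.eval a).card := hkey
      _ = _ := mul_comm _ _
  · rw [← hq]
    simpa using Finset.card_image_le (s := (Finset.univ : Finset F)) (f := fun a => f.eval a)
end

section
/- Let F be a finite field with q = r² elements (so r is a prime power and √q = r), and let f ∈ F[X] be a polynomial with deg f = r + 1 and |V_f| > 2. Then f is a minimal value set polynomial if and only if there exist α, β, γ ∈ F with α ≠ 0 such that f = α·(X+β)^{r+1} + γ. -/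
/-!
Normalise `f` to be monic and write `f = (X + b)^(r+1) + h` with `b` the coefficient of `X^r`;
then `deg h < r`, because the `X^r`-coefficient of `(X + b)^(r+1)` is `(r+1) b = b`. As
`y^r = y` for `y = (a + b)^(r+1)` (because `x^(r^2) = x`) and `x ↦ x^r` is additive,
`f(a)^r - f(a) = h(a)^r - h(a)` for every `a`. If `|V_f| ≤ r`, interpolating `y ↦ y^r - y` on
`V_f` gives `R` with `deg R < r` and `R ∘ f = h^r - h`, since both sides have degree `< q` and
agree on `F`. Then `r + 1` divides `deg (h^r - h) = r deg h`, which forces `h` to be constant.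
Conversely, the values of `x^(r+1)` are roots of `y^r - y`, and each of them has at most `r + 1`
preimages, so there are exactly `r`.
-/

open Polynomial Finset

section ValueSet

variable {R : Type*} [Fintype R] [DecidableEq R]

def valueSet [Semiring R] (f : R[X]) : Finset R :=
  univ.image fun a => f.eval a

theorem eval_mem_valueSet [Semiring R] (f : R[X]) (a : R) : f.eval a ∈ valueSet f :=
  mem_image_of_mem _ (mem_univ a)

theorem valueSet_comp_X_add_C [CommRing R] (f : R[X]) (β : R) :
    valueSet (f.comp (X + C β)) = valueSet f := by
  have : (fun a => (f.comp (X + C β)).eval a) = (fun a => f.eval a) ∘ Equiv.addRight β := by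
    ext a; simp
  rw [valueSet, this, ← image_image, image_univ_equiv, valueSet]

theorem card_valueSet_C_mul_add_C [CommRing R] [NoZeroDivisors R] {α : R} (hα : α ≠ 0)
    (f : R[X]) (γ : R) : #(valueSet (C α * f + C γ)) = #(valueSet f) := by
  have : (fun a => (C α * f + C γ).eval a) = (fun y => α * y + γ) ∘ fun a => f.eval a := by
    ext a; simp
  rw [valueSet, this, ← image_image, valueSet]
  exact card_image_of_injective _ ((add_left_injective γ).comp (mul_right_injective₀ hα))

end ValueSet

theorem Nat.sq_sub_one_div_add_one {r : ℕ} (hr : 0 < r) : (r ^ 2 - 1) / (r + 1) + 1 = r := by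
  rw [← Nat.one_pow 2, Nat.sq_sub_sq, Nat.one_pow, Nat.mul_div_cancel_left _ (Nat.succ_pos r)]
  omega

theorem Polynomial.natDegree_eq_zero_of_dvd_natDegree_pow_sub_self {R : Type*} [CommRing R]
    [IsDomain R] {r : ℕ} {h : R[X]} (hh : h.natDegree < r)
    (hdvd : r + 1 ∣ (h ^ r - h).natDegree) : h.natDegree = 0 := by
  by_contra he
  have hpow : (h ^ r).natDegree = r * h.natDegree := natDegree_pow h r
  rw [natDegree_sub_eq_left_of_natDegree_lt (by rw [hpow]; nlinarith [Nat.pos_of_ne_zero he]),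
    hpow] at hdvd
  have := Nat.le_of_dvd (Nat.pos_of_ne_zero he) <|
    (Nat.coprime_self_add_left.mpr (Nat.coprime_one_left r)).dvd_of_dvd_mul_left hdvd
  omega

theorem Polynomial.natDegree_sub_X_add_C_coeff_pow_lt {R : Type*} [CommRing R] {r : ℕ}
    (hr : 0 < r) (hr0 : (r : R) = 0) {f : R[X]} (hf : f.Monic) (hdeg : f.natDegree = r + 1) :
    (f - (X + C (f.coeff r)) ^ (r + 1)).natDegree < r := by
  suffices (f - (X + C (f.coeff r)) ^ (r + 1)).natDegree ≤ r - 1 by omega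
  rw [natDegree_le_iff_coeff_eq_zero]
  intro N hN
  rw [coeff_sub, coeff_X_add_C_pow]
  obtain rfl | rfl | hN : N = r ∨ N = r + 1 ∨ r + 1 < N := by omega
  · simp [hr0]
  · simp [← hdeg, hf.coeff_natDegree]
  · rw [coeff_eq_zero_of_natDegree_lt (hdeg ▸ hN), Nat.choose_eq_zero_of_lt hN]
    simp

section FiniteField

variable {F : Type*} [Field F] [Fintype F] {r : ℕ}

theorem two_le_of_card_eq_sq (hcard : Fintype.card F = r ^ 2) : 2 ≤ r := by
  have := hcard ▸ Fintype.one_lt_card (α := F)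
  by_contra! h
  interval_cases r <;> simp at this

theorem natCast_eq_zero_of_card_eq_sq (hcard : Fintype.card F = r ^ 2) : (r : F) = 0 := by
  have := FiniteField.cast_card_eq_zero F
  rw [hcard, Nat.cast_pow] at this
  exact pow_eq_zero_iff two_ne_zero |>.mp this

theorem pow_add_one_pow_eq_self (hcard : Fintype.card F = r ^ 2) (x : F) :
    (x ^ (r + 1)) ^ r = x ^ (r + 1) := by
  rw [← pow_mul, add_one_mul, ← sq, ← hcard, pow_add, FiniteField.pow_card, pow_succ']

theorem add_pow_of_card_eq_sq (hr : IsPrimePow r) (hcard : Fintype.card F = r ^ 2) (x y : F) :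
    (x + y) ^ r = x ^ r + y ^ r := by
  obtain ⟨p, m, hp, -, rfl⟩ := hr
  have : Fact p.Prime := ⟨hp.nat_prime⟩
  have : CharP F p := charP_of_card_eq_prime_pow (hcard.trans (pow_mul p m 2).symm)
  exact add_pow_char_pow x y p m

theorem pow_add_one_add_pow_sub_self (hr : IsPrimePow r) (hcard : Fintype.card F = r ^ 2)
    (x z : F) : (x ^ (r + 1) + z) ^ r - (x ^ (r + 1) + z) = z ^ r - z := by
  rw [add_pow_of_card_eq_sq hr hcard, pow_add_one_pow_eq_self hcard]
  ring

variable [DecidableEq F]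

theorem card_valueSet_X_pow_add_one (hcard : Fintype.card F = r ^ 2) :
    #(valueSet (X ^ (r + 1) : F[X])) = r := by
  have hr := two_le_of_card_eq_sq hcard
  apply le_antisymm
  · have hsub : valueSet (X ^ (r + 1) : F[X]) ⊆ (X ^ r - X : F[X]).roots.toFinset := by
      simp only [valueSet, eval_pow, eval_X, subset_iff, mem_image, mem_univ, true_and,
        forall_exists_index, forall_apply_eq_imp_iff]
      intro x
      rw [Multiset.mem_toFinset, mem_roots (FiniteField.X_pow_card_sub_X_ne_zero F (by omega)),
        IsRoot, eval_sub, eval_pow, eval_X, pow_add_one_pow_eq_self hcard, sub_self]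
    calc #(valueSet (X ^ (r + 1) : F[X])) ≤ Multiset.card (X ^ r - X : F[X]).roots :=
          (card_le_card hsub).trans (Multiset.toFinset_card_le _)
      _ ≤ r := (card_roots' _).trans (FiniteField.X_pow_card_sub_X_natDegree_eq F (by omega)).le
  · have := FiniteField.card_image_polynomial_eval (p := (X ^ (r + 1) : F[X]))
      (by rw [degree_X_pow]; exact_mod_cast Nat.succ_pos r)
    rw [hcard, natDegree_X_pow] at this
    change r ^ 2 ≤ (r + 1) * #(valueSet (X ^ (r + 1) : F[X])) at this
    nlinarith

theorem card_valueSet_C_mul_X_add_C_pow_add_C (hcard : Fintype.card F = r ^ 2) {α : F}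
    (hα : α ≠ 0) (β γ : F) : #(valueSet (C α * (X + C β) ^ (r + 1) + C γ)) = r := by
  rw [card_valueSet_C_mul_add_C hα, ← X_pow_comp, valueSet_comp_X_add_C,
    card_valueSet_X_pow_add_one hcard]

theorem exists_degree_lt_card_valueSet_eval_eq (f : F[X]) (φ : F → F) :
    ∃ R : F[X], R.degree < #(valueSet f) ∧ ∀ a, R.eval (f.eval a) = φ (f.eval a) :=
  ⟨Lagrange.interpolate (valueSet f) id φ, Lagrange.degree_interpolate_lt _ (Set.injOn_id _),
    fun a => Lagrange.eval_interpolate_at_node φ (Set.injOn_id _) (eval_mem_valueSet f a)⟩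

theorem eq_X_add_C_pow_add_C_of_card_valueSet_le (hr : IsPrimePow r)
    (hcard : Fintype.card F = r ^ 2) {f : F[X]} (hf : f.Monic) (hdeg : f.natDegree = r + 1)
    (hV : #(valueSet f) ≤ r) : ∃ β γ : F, f = (X + C β) ^ (r + 1) + C γ := by
  have hr2 := two_le_of_card_eq_sq hcard
  obtain ⟨h, hfh, hh⟩ : ∃ h : F[X], f = (X + C (f.coeff r)) ^ (r + 1) + h ∧ h.natDegree < r :=
    ⟨_, by ring, natDegree_sub_X_add_C_coeff_pow_lt (by omega)
      (natCast_eq_zero_of_card_eq_sq hcard) hf hdeg⟩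
  obtain ⟨R, hRdeg, hR⟩ := exists_degree_lt_card_valueSet_eval_eq f fun y => y ^ r - y
  have hRdeg : R.natDegree < r := by
    rcases eq_or_ne R 0 with rfl | hR0
    · simpa using (by omega : 0 < r)
    · exact (natDegree_lt_iff_degree_lt hR0).2 (hRdeg.trans_le (by exact_mod_cast hV))
  have hcomp : R.comp f = h ^ r - h := by
    apply eq_of_natDegree_lt_card_of_eval_eq' _ _ univ
    · intro a _
      rw [eval_comp, hR, hfh, eval_add, eval_pow, eval_add, eval_X, eval_C,
        pow_add_one_add_pow_sub_self hr hcard, eval_sub, eval_pow]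
    · rw [card_univ, hcard, natDegree_comp, hdeg, max_lt_iff]
      constructor
      · nlinarith
      · calc (h ^ r - h).natDegree ≤ max (r * h.natDegree) h.natDegree :=
              (natDegree_sub_le _ _).trans (max_le_max_right _ natDegree_pow_le)
          _ < r ^ 2 := by rw [max_lt_iff]; constructor <;> nlinarith
  have hdvd : r + 1 ∣ (h ^ r - h).natDegree := by
    rw [← hcomp, natDegree_comp, hdeg]
    exact dvd_mul_left _ _
  have hconst := natDegree_eq_zero_of_dvd_natDegree_pow_sub_self hh hdvd
  exact ⟨f.coeff r, h.coeff 0, by rw [← eq_C_of_natDegree_eq_zero hconst]; exact hfh⟩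

theorem exists_eq_C_mul_X_add_C_pow_add_C_of_card_valueSet_le (hr : IsPrimePow r)
    (hcard : Fintype.card F = r ^ 2) {f : F[X]} (hdeg : f.natDegree = r + 1)
    (hV : #(valueSet f) ≤ r) : ∃ α β γ : F, α ≠ 0 ∧ f = C α * (X + C β) ^ (r + 1) + C γ := by
  have hf0 : f ≠ 0 := by rintro rfl; simp at hdeg
  set α := f.leadingCoeff
  have hα : α ≠ 0 := leadingCoeff_ne_zero.mpr hf0
  have hfg : C α * (f * C α⁻¹) + C 0 = f := by
    rw [C_0, add_zero, mul_left_comm, ← C_mul, mul_inv_cancel₀ hα, C_1, mul_one]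
  have hgV : #(valueSet (f * C α⁻¹)) ≤ r := by rwa [← card_valueSet_C_mul_add_C hα _ 0, hfg]
  obtain ⟨β, γ, hg⟩ := eq_X_add_C_pow_add_C_of_card_valueSet_le hr hcard
    (monic_mul_leadingCoeff_inv hf0) (by rwa [natDegree_mul_C (inv_ne_zero hα)]) hgV
  refine ⟨α, β, α * γ, hα, ?_⟩
  rw [← hfg, hg, C_mul, C_0, add_zero]
  ring

end FiniteField

theorem stmt2_general {F : Type*} [Field F] [Fintype F] [DecidableEq F] (r : ℕ)
    (hr : IsPrimePow r) (hcard : Fintype.card F = r ^ 2)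
    (f : F[X]) (hdeg : f.natDegree = r + 1) :
    (Finset.univ.image fun a => f.eval a).card = (r ^ 2 - 1) / f.natDegree + 1 ↔
      ∃ α β γ : F, α ≠ 0 ∧ f = C α * (X + C β) ^ (r + 1) + C γ := by
  change #(valueSet f) = _ ↔ _
  rw [hdeg, Nat.sq_sub_one_div_add_one hr.pos]
  refine ⟨fun hV => exists_eq_C_mul_X_add_C_pow_add_C_of_card_valueSet_le hr hcard hdeg hV.le, ?_⟩
  rintro ⟨α, β, γ, hα, rfl⟩
  exact card_valueSet_C_mul_X_add_C_pow_add_C hcard hα β γ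

/-- Over a finite field `F` with `q = r²` elements, a polynomial of
degree `r + 1 = √q + 1` with more than 2 values is a minimal value set polynomial iff
it has the form `α(X+β)^{r+1} + γ` with `α ≠ 0`. -/
theorem stmt2 {F : Type*} [Field F] [Fintype F] [DecidableEq F] (r : ℕ)
    (hr : IsPrimePow r) (hcard : Fintype.card F = r ^ 2)
    (f : F[X]) (hdeg : f.natDegree = r + 1)
    (hV : 2 < (Finset.univ.image fun a => f.eval a).card) :
    (Finset.univ.image fun a => f.eval a).card = (r ^ 2 - 1) / f.natDegree + 1 ↔
      ∃ α β γ : F, α ≠ 0 ∧ f = C α * (X + C β) ^ (r + 1) + C γ :=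
  stmt2_general r hr hcard f hdeg
end

section
/- Let F be a finite field with q elements and let f ∈ F[X] be a minimal value set polynomial with |V_f| > 2. Then the number of elements γ ∈ V_f for which f − γ has a root of multiplicity exactly 1 (in an algebraic closure of F) is at least |V_f| − 1. -/
open Polynomial

lemma sum_count_le_card {α : Type*} [DecidableEq α] (s : Finset α) (m : Multiset α) :
    ∑ x ∈ s, m.count x ≤ Multiset.card m := by
  calc ∑ x ∈ s, m.count x = ∑ x ∈ s ∩ m.toFinset, m.count x := by
        refine (Finset.sum_subset Finset.inter_subset_left ?_).symm
        intro x hx hx'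
        have : x ∉ m.toFinset := fun h => hx' (Finset.mem_inter.mpr ⟨hx, h⟩)
        simpa [Multiset.count_eq_zero] using fun h => this (Multiset.mem_toFinset.mpr h)
    _ ≤ ∑ x ∈ m.toFinset, m.count x :=
        Finset.sum_le_sum_of_subset Finset.inter_subset_right
    _ = Multiset.card m := m.toFinset_sum_count_eq

/-- In an algebraically closed field, if `g` has positive degree and nonzero derivative,
then at most one constant `c` is such that `g - C c` has no simple root. -/
lemma bad_subsingleton {K : Type*} [Field K] [IsAlgClosed K] (g : K[X])
    (hg : 0 < g.natDegree) (hg' : derivative g ≠ 0) :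
    {c : K | ∀ π : K, rootMultiplicity π (g - C c) ≠ 1}.Subsingleton := by
  classical
  intro c₁ h₁ c₂ h₂
  by_contra hne
  set d := g.natDegree with hd
  have key : ∀ c : K, (∀ π : K, rootMultiplicity π (g - C c) ≠ 1) →
      ∃ s : Finset K, (∀ x ∈ s, (g - C c).IsRoot x) ∧ 2 * s.card ≤ d ∧
        d ≤ (∑ x ∈ s, (derivative g).roots.count x) + s.card := by
    intro c hc
    set P := g - C c with hP
    have hPdeg : P.natDegree = d := natDegree_sub_C
    have hPne : P ≠ 0 := fun h0 => by simp [h0] at hPdeg; omega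
    have hroots : Multiset.card P.roots = d := by
      rw [← hPdeg]
      exact splits_iff_card_roots.mp (IsAlgClosed.splits (k := K) P)
    refine ⟨P.roots.toFinset, ?_, ?_, ?_⟩
    · intro x hx
      exact isRoot_of_mem_roots (Multiset.mem_toFinset.mp hx)
    · have h2 : ∀ x ∈ P.roots.toFinset, 2 ≤ P.roots.count x := by
        intro x hx
        have h1 : 1 ≤ P.roots.count x :=
          Multiset.one_le_count_iff_mem.mpr (Multiset.mem_toFinset.mp hx)
        have hne1 : P.roots.count x ≠ 1 := by
          rw [count_roots]; exact hc x
        omega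
      calc 2 * P.roots.toFinset.card = ∑ _x ∈ P.roots.toFinset, 2 := by
            rw [Finset.sum_const, smul_eq_mul, mul_comm]
        _ ≤ ∑ x ∈ P.roots.toFinset, P.roots.count x := Finset.sum_le_sum h2
        _ = Multiset.card P.roots := P.roots.toFinset_sum_count_eq
        _ = d := hroots
    · have hder : derivative P = derivative g := by
        rw [hP, derivative_sub, derivative_C, sub_zero]
      have hstep : ∀ x ∈ P.roots.toFinset,
          P.roots.count x ≤ (derivative g).roots.count x + 1 := by
        intro x hx
        have := rootMultiplicity_sub_one_le_derivative_rootMultiplicity_of_ne_zero P x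
          (by rw [hder]; exact hg')
        rw [hder] at this
        rw [count_roots, count_roots]
        omega
      calc d = Multiset.card P.roots := hroots.symm
        _ = ∑ x ∈ P.roots.toFinset, P.roots.count x := P.roots.toFinset_sum_count_eq.symm
        _ ≤ ∑ x ∈ P.roots.toFinset, ((derivative g).roots.count x + 1) :=
            Finset.sum_le_sum hstep
        _ = (∑ x ∈ P.roots.toFinset, (derivative g).roots.count x) + P.roots.toFinset.card := by
            rw [Finset.sum_add_distrib, Finset.sum_const, smul_eq_mul, mul_one]
  obtain ⟨s₁, hs₁root, hs₁card, hs₁⟩ := key c₁ h₁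
  obtain ⟨s₂, hs₂root, hs₂card, hs₂⟩ := key c₂ h₂
  have hdisj : Disjoint s₁ s₂ := by
    rw [Finset.disjoint_left]
    intro x hx1 hx2
    have e1 := hs₁root x hx1
    have e2 := hs₂root x hx2
    simp only [IsRoot, eval_sub, eval_C, sub_eq_zero] at e1 e2
    exact hne (by rw [← e1, ← e2])
  have hsum : (∑ x ∈ s₁, (derivative g).roots.count x) +
      (∑ x ∈ s₂, (derivative g).roots.count x) ≤ Multiset.card (derivative g).roots := by
    rw [← Finset.sum_union hdisj]
    exact sum_count_le_card _ _
  have hcard : Multiset.card (derivative g).roots ≤ (derivative g).natDegree :=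
    card_roots' _
  have hlt : (derivative g).natDegree < d := natDegree_derivative_lt (by omega)
  omega

/-- Let `f` be a minimal value set polynomial over a finite field `F`
with `|V_f| > 2`. Then `f − γ` has a root of multiplicity exactly `1` (in an algebraic
closure of `F`) for at least `|V_f| − 1` values `γ ∈ V_f`. -/
theorem stmt4 {F : Type*} [Field F] [Fintype F] (q : ℕ) (hq : Fintype.card F = q)
    (f : F[X]) (hf : 0 < f.natDegree)
    (hmvsp : (Set.range fun a : F => f.eval a).ncard = (q - 1) / f.natDegree + 1)
    (hV : 2 < (Set.range fun a : F => f.eval a).ncard) :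
    (Set.range fun a : F => f.eval a).ncard - 1 ≤
      {γ : F | (γ ∈ Set.range fun a : F => f.eval a) ∧
        ∃ π : AlgebraicClosure F,
          Polynomial.rootMultiplicity π
            (f.map (algebraMap F (AlgebraicClosure F)) -
              C (algebraMap F (AlgebraicClosure F) γ)) = 1}.ncard := by
  classical
  set V : Set F := Set.range fun a : F => f.eval a with hVdef
  -- Step 1 : derivative of f is nonzero
  have hq2 : 2 ≤ q := by
    rw [← hq]; exact Fintype.one_lt_card
  have hf' : derivative f ≠ 0 := by
    intro hf0
    set p := ringChar F with hp
    haveI : Fact p.Prime := ⟨CharP.char_is_prime F p⟩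
    have hpprime : p.Prime := Fact.out
    set g := f.contract p with hg
    have hfg : expand F p g = f := expand_contract p hf0 hpprime.ne_zero
    have heval : ∀ a : F, f.eval a = g.eval (a ^ p) := by
      intro a
      rw [← hfg, expand_eval]
    have hsurj : Function.Surjective fun a : F => a ^ p := by
      intro b
      obtain ⟨a, ha⟩ := (bijective_frobenius F p).2 b
      exact ⟨a, by rwa [frobenius_def] at ha⟩
    have hrange : V = Set.range fun a : F => g.eval a := by
      rw [hVdef]
      have : (fun a : F => f.eval a) = (fun b : F => g.eval b) ∘ (fun a : F => a ^ p) := by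
        funext a; exact heval a
      rw [this, Function.Surjective.range_comp hsurj]
    set e := g.natDegree with he
    have hd : f.natDegree = e * p := by
      rw [← hfg, natDegree_expand]
    have he1 : 1 ≤ e := by
      rcases Nat.eq_zero_or_pos e with h | h
      · rw [h, zero_mul] at hd; omega
      · exact h
    -- fiber bound
    have hfiber : ∀ a ∈ Finset.univ.image fun x : F => g.eval x,
        (Finset.univ.filter fun x : F => g.eval x = a).card ≤ e := by
      intro a _
      have hsub : (Finset.univ.filter fun x : F => g.eval x = a) ⊆ (g - C a).roots.toFinset := by
        intro x hx
        simp only [Finset.mem_filter] at hx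
        have hne0 : g - C a ≠ 0 := by
          intro h0
          have : (g - C a).natDegree = e := natDegree_sub_C
          rw [h0] at this
          simp at this
          omega
        rw [Multiset.mem_toFinset, mem_roots hne0]
        simp [IsRoot, hx.2]
      calc (Finset.univ.filter fun x : F => g.eval x = a).card
          ≤ (g - C a).roots.toFinset.card := Finset.card_le_card hsub
        _ ≤ Multiset.card (g - C a).roots := Multiset.toFinset_card_le _
        _ ≤ (g - C a).natDegree := card_roots' _
        _ = e := natDegree_sub_C
    have hcardF : Fintype.card F ≤ e * (Finset.univ.image fun x : F => g.eval x).card :=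
      Finset.card_le_mul_card_image _ _ hfiber
    have himg : ((Finset.univ.image fun x : F => g.eval x) : Set F) =
        Set.range fun a : F => g.eval a := by
      rw [Finset.coe_image, Finset.coe_univ, Set.image_univ]
    have hVcard : V.ncard = (Finset.univ.image fun x : F => g.eval x).card := by
      rw [hrange, ← himg, Set.ncard_coe_finset]
    set k := (q - 1) / f.natDegree with hk
    have hVk : V.ncard = k + 1 := hmvsp
    have hk2 : 2 ≤ k := by omega
    have hdk : f.natDegree * k ≤ q - 1 := by
      rw [hk, mul_comm]
      exact Nat.div_mul_le_self _ _
    have hm1 : 2 * (e * k) ≤ q - 1 := by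
      calc 2 * (e * k) ≤ p * (e * k) := Nat.mul_le_mul_right _ hpprime.two_le
        _ = (e * p) * k := by ring
        _ = f.natDegree * k := by rw [hd]
        _ ≤ q - 1 := hdk
    have hm2 : 2 * e ≤ e * k := by
      calc 2 * e = e * 2 := by ring
        _ ≤ e * k := Nat.mul_le_mul_left _ hk2
    have hm3 : q ≤ e * k + e := by
      calc q = Fintype.card F := hq.symm
        _ ≤ e * (Finset.univ.image fun x : F => g.eval x).card := hcardF
        _ = e * V.ncard := by rw [hVcard]
        _ = e * (k + 1) := by rw [hVk]
        _ = e * k + e := by ring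
    omega
  -- Step 2 : the bad set is a subsingleton
  set K := AlgebraicClosure F
  set φ := algebraMap F K with hφ
  have hφinj : Function.Injective φ := φ.injective
  set Bad : Set F := {γ : F | ∀ π : K, rootMultiplicity π (f.map φ - C (φ γ)) ≠ 1} with hBad
  have hBadss : Bad.Subsingleton := by
    have hmapdeg : (f.map φ).natDegree = f.natDegree := natDegree_map φ
    have hKbad := bad_subsingleton (f.map φ) (by omega)
      (by rw [derivative_map]
          exact (Polynomial.map_ne_zero_iff hφinj).mpr hf')
    intro γ₁ hγ₁ γ₂ hγ₂
    exact hφinj (hKbad hγ₁ hγ₂)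
  -- Step 3 : conclude
  set T : Set F := {γ : F | γ ∈ V ∧
      ∃ π : K, rootMultiplicity π (f.map φ - C (φ γ)) = 1} with hT
  have hVfin : V.Finite := Set.finite_range _
  have hTsubV : T ⊆ V := fun γ hγ => hγ.1
  have hsub : V \ Bad ⊆ T := by
    intro γ hγ
    refine ⟨hγ.1, ?_⟩
    have h := hγ.2
    rw [hBad] at h
    simp only [Set.mem_setOf_eq] at h
    push_neg at h
    exact h
  have h1 : (V \ Bad).ncard ≤ T.ncard :=
    Set.ncard_le_ncard hsub (hVfin.subset hTsubV)
  have h2 : (V ∩ Bad).ncard ≤ 1 := by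
    have hfin : (V ∩ Bad).Finite := hVfin.subset Set.inter_subset_left
    rw [Set.ncard_le_one hfin]
    intro a ha b hb
    exact hBadss ha.2 hb.2
  have h3 : V.ncard ≤ (V \ Bad).ncard + (V ∩ Bad).ncard := by
    calc V.ncard = ((V \ Bad) ∪ (V ∩ Bad)).ncard := by
          rw [Set.diff_union_inter]
      _ ≤ (V \ Bad).ncard + (V ∩ Bad).ncard :=
          Set.ncard_union_le _ _
  omega
end

section
/- Let F be a finite field of characteristic p with q elements, let k be a positive integer and v a positive divisor of p^k − 1. Let T ∈ F[X] satisfy (*) with T(0) = 0, and suppose A ∈ F[X] is a p^k-additive polynomial satisfying (*) such that T∘X^v = X^{v−1}·A. Then for every f ∈ W(A|F) one has f^v ∈ W(T|F); in particular, |W(T|F)| ≥ (|W(A|F)| − 1)/v + 1. -/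
open Polynomial

/-!
Substituting `f` into `T ∘ X^v = X^(v-1) A` gives `T ∘ f^v = f^(v-1) (A ∘ f)`, and since `p ∤ v`
the chain rule `(f^v)' = v f^(v-1) f'` turns `A ∘ f = θ (X^q - X) f'` into
`T ∘ f^v = θ v⁻¹ (X^q - X) (f^v)'`. For the bound, `f ↦ f^v` maps `W(A|F) \ {0}` into
`W(T|F) \ {0}` with fibres of size at most `v`; `W(T|F)` is finite because comparing degrees
forces `deg f < q`.
-/

/-- The paper's `W(T|F)` is `W T q` with `q = |F|`. -/
def W {F : Type*} [Field F] (T : F[X]) (q : ℕ) : Set F[X] :=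
  {f | ∃ θ : F, θ ≠ 0 ∧ T.comp f = C θ * ((X ^ q - X) * f.derivative)}

section W

variable {F : Type*} [Field F] {T A f : F[X]} {q : ℕ}

theorem zero_mem_W (hT0 : T.eval 0 = 0) : (0 : F[X]) ∈ W T q :=
  ⟨1, one_ne_zero, by simp [comp, eval₂_at_zero, coeff_zero_eq_eval_zero, hT0]⟩

theorem natDegree_lt_of_mem_W (hT : 1 < T.natDegree) (hq : 1 < q) (hf : f ∈ W T q) :
    f.natDegree < q := by
  obtain ⟨θ, hθ, hTf⟩ := hf
  by_cases hf0 : f.natDegree = 0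
  · omega
  have hdeg := congrArg natDegree hTf
  have hf' : derivative f ≠ 0 := by
    intro hf'
    rw [hf', mul_zero, mul_zero, natDegree_comp, natDegree_zero, Nat.mul_eq_zero] at hdeg
    omega
  rw [natDegree_comp, natDegree_C_mul hθ,
    natDegree_mul (FiniteField.X_pow_card_sub_X_ne_zero F hq) hf',
    FiniteField.X_pow_card_sub_X_natDegree_eq F hq] at hdeg
  nlinarith [natDegree_derivative_lt hf0]

theorem W_finite [Finite F] (hT : 1 < T.natDegree) (hq : 1 < q) : (W T q).Finite := by
  have : Finite (degreeLT F q) := Module.finite_of_finite F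
  exact (degreeLT F q : Set F[X]).toFinite.subset fun f hf =>
    mem_degreeLT.2 <| degree_le_natDegree.trans_lt <| by
      exact_mod_cast natDegree_lt_of_mem_W hT hq hf

theorem comp_pow_eq_of_comp_X_pow {R : Type*} [CommRing R] {T A : R[X]} {v : ℕ}
    (hTA : T.comp (X ^ v) = X ^ (v - 1) * A) (f : R[X]) :
    T.comp (f ^ v) = f ^ (v - 1) * A.comp f := by
  rw [← X_pow_comp, ← comp_assoc, hTA, mul_comp, X_pow_comp]

theorem pow_mem_W {v : ℕ} (hv : (v : F) ≠ 0) (hTA : T.comp (X ^ v) = X ^ (v - 1) * A)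
    (hf : f ∈ W A q) : f ^ v ∈ W T q := by
  obtain ⟨θ, hθ, hAf⟩ := hf
  refine ⟨θ * (v : F)⁻¹, mul_ne_zero hθ (inv_ne_zero hv), ?_⟩
  rw [comp_pow_eq_of_comp_X_pow hTA, hAf, derivative_pow, C_mul]
  have hvv : C (v : F)⁻¹ * C (v : F) = 1 := by rw [← C_mul, inv_mul_cancel₀ hv, C_1]
  linear_combination (-(f ^ (v - 1) * C θ * ((X ^ q - X) * derivative f))) * hvv

end W

theorem natCast_ne_zero_of_dvd_pow_sub_one {R : Type*} [Ring R] [Nontrivial R] (p : ℕ)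
    [CharP R p] (hp : p ≠ 0) {k v : ℕ} (hk : k ≠ 0) (hvd : v ∣ p ^ k - 1) : (v : R) ≠ 0 := by
  intro hv
  have h := zero_dvd_iff.1 (hv ▸ Nat.cast_dvd_cast (α := R) hvd)
  rw [Nat.cast_sub (Nat.one_le_pow _ _ (Nat.pos_of_ne_zero hp)), Nat.cast_pow, CharP.cast_eq_zero,
    zero_pow hk, Nat.cast_one, zero_sub, neg_eq_zero] at h
  exact one_ne_zero h

theorem ncard_le_mul_ncard_sub_one_add_one_of_pow_mem {R : Type*} [CommRing R] [IsDomain R]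
    {s t : Set R} {v : ℕ} (hv : 0 < v) (ht : t.Finite) (h0 : 0 ∈ t)
    (hst : ∀ f ∈ s, f ^ v ∈ t) : s.ncard ≤ v * (t.ncard - 1) + 1 := by
  classical
  rcases s.finite_or_infinite with hs | hs
  swap
  · simp [hs.ncard]
  have hs0 := hs.sdiff (t := {0})
  have ht0 := ht.sdiff (t := {0})
  have hcard : hs0.toFinset.card ≤ v * ht0.toFinset.card := by
    refine Finset.card_le_mul_card_image_of_maps_to (f := (· ^ v)) ?_ v ?_
    · intro f hf
      simp only [Set.Finite.mem_toFinset, Set.mem_sdiff, Set.mem_singleton_iff] at hf ⊢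
      exact ⟨hst f hf.1, pow_ne_zero v hf.2⟩
    · intro g _
      calc (hs0.toFinset.filter (· ^ v = g)).card ≤ (nthRoots v g).toFinset.card :=
            Finset.card_le_card fun f hf => by
              simpa [mem_nthRoots hv] using (Finset.mem_filter.1 hf).2
        _ ≤ v := (Multiset.toFinset_card_le _).trans (card_nthRoots v g)
  rw [← Set.ncard_eq_toFinset_card _ hs0, ← Set.ncard_eq_toFinset_card _ ht0,
    Set.ncard_sdiff_singleton_of_mem h0] at hcard
  have := Set.pred_ncard_le_ncard_sdiff_singleton s 0
  omega

theorem stmt7_general {F : Type*} [Field F] [Fintype F] (p q k v : ℕ) (hp : p.Prime)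
    [CharP F p] (hq : Fintype.card F = q) (hk : 0 < k) (hv : 0 < v)
    (hvd : v ∣ p ^ k - 1)
    (T A : F[X])
    (hTstar : T.Monic ∧ 2 < T.natDegree ∧
      Multiset.card T.roots = T.natDegree ∧ T.roots.Nodup)
    (hT0 : T.eval 0 = 0)
    (hTA : T.comp (X ^ v) = X ^ (v - 1) * A) :
    (∀ f ∈ {f : F[X] | ∃ θ : F, θ ≠ 0 ∧
        A.comp f = C θ * ((X ^ q - X) * f.derivative)},
      f ^ v ∈ {f : F[X] | ∃ θ : F, θ ≠ 0 ∧
        T.comp f = C θ * ((X ^ q - X) * f.derivative)}) ∧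
    ((({f : F[X] | ∃ θ : F, θ ≠ 0 ∧
        A.comp f = C θ * ((X ^ q - X) * f.derivative)}.ncard : ℚ) - 1) / v + 1 ≤
      ({f : F[X] | ∃ θ : F, θ ≠ 0 ∧
        T.comp f = C θ * ((X ^ q - X) * f.derivative)}.ncard : ℚ)) := by
  change (∀ f ∈ W A q, f ^ v ∈ W T q) ∧
    (((W A q).ncard : ℚ) - 1) / v + 1 ≤ ((W T q).ncard : ℚ)
  have hvF : (v : F) ≠ 0 := natCast_ne_zero_of_dvd_pow_sub_one p hp.ne_zero hk.ne' hvd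
  have hpow : ∀ f ∈ W A q, f ^ v ∈ W T q := fun f => pow_mem_W hvF hTA
  refine ⟨hpow, ?_⟩
  have hq1 : 1 < q := hq ▸ Fintype.one_lt_card
  have hWT := W_finite (one_lt_two.trans hTstar.2.1) hq1 (T := T)
  have hcount := ncard_le_mul_ncard_sub_one_add_one_of_pow_mem hv hWT (zero_mem_W hT0) hpow
  have hT1 : 1 ≤ (W T q).ncard := (Set.ncard_pos hWT).2 ⟨0, zero_mem_W hT0⟩
  have hvQ : (0 : ℚ) < v := by exact_mod_cast hv
  have hcountQ : ((W A q).ncard : ℚ) ≤ v * (((W T q).ncard : ℚ) - 1) + 1 := by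
    have := Nat.cast_le (α := ℚ).2 hcount
    push_cast [Nat.cast_sub hT1] at this
    exact this
  rw [div_add_one hvQ.ne', div_le_iff₀ hvQ]
  linarith

/-- Let `F` have `q` elements and characteristic `p`, let
`v ∣ p^k − 1`, let `T` satisfy (*) with `T(0) = 0`, and let `A` be a `p^k`-additive
polynomial satisfying (*) with `T∘X^v = X^{v−1}·A`. Then `f ∈ W(A|F)` implies
`f^v ∈ W(T|F)`, and `|W(T|F)| ≥ (|W(A|F)| − 1)/v + 1`. -/
theorem stmt7 {F : Type*} [Field F] [Fintype F] (p q k v : ℕ) (hp : p.Prime)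
    [CharP F p] (hq : Fintype.card F = q) (hk : 0 < k) (hv : 0 < v)
    (hvd : v ∣ p ^ k - 1)
    (T A : F[X])
    (hTstar : T.Monic ∧ 2 < T.natDegree ∧
      Multiset.card T.roots = T.natDegree ∧ T.roots.Nodup)
    (hT0 : T.eval 0 = 0)
    (hAadd : ∃ (m : ℕ) (ω : ℕ → F),
      A = ∑ i ∈ Finset.range (m + 1), C (ω i) * X ^ p ^ (k * i))
    (hAstar : A.Monic ∧ 2 < A.natDegree ∧
      Multiset.card A.roots = A.natDegree ∧ A.roots.Nodup)
    (hTA : T.comp (X ^ v) = X ^ (v - 1) * A) :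
    (∀ f ∈ {f : F[X] | ∃ θ : F, θ ≠ 0 ∧
        A.comp f = C θ * ((X ^ q - X) * f.derivative)},
      f ^ v ∈ {f : F[X] | ∃ θ : F, θ ≠ 0 ∧
        T.comp f = C θ * ((X ^ q - X) * f.derivative)}) ∧
    ((({f : F[X] | ∃ θ : F, θ ≠ 0 ∧
        A.comp f = C θ * ((X ^ q - X) * f.derivative)}.ncard : ℚ) - 1) / v + 1 ≤
      ({f : F[X] | ∃ θ : F, θ ≠ 0 ∧
        T.comp f = C θ * ((X ^ q - X) * f.derivative)}.ncard : ℚ)) :=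
  stmt7_general p q k v hp hq hk hv hvd T A hTstar hT0 hTA
end

section
/- Let q be a prime power, n ≥ 1, and K a finite field with q^n elements. Let f ∈ K[X] be non-constant with f(a)^q = f(a) for all a ∈ K (i.e. V_f ⊆ F_q). Then the following are equivalent: (1) |V_f| = ⌊(q^n−1)/(deg f)⌋ + 1 and |V_f| = q; (2) f^q − f = (X^{q^n} − X)·f′; (3) q^{n−1} ≤ deg f ≤ (q^n−1)/(q−1); (4) 0 < deg f ≤ (q^n−1)/(q−1). -/
open Polynomial

/-- Let `K` have `q^n` elements and let `f ∈ K[X]` be non-constant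
with all values in `F_q`. The following are equivalent:
(1) `f` is an m.v.s.p. with exactly `q` values;
(2) `f^q − f = (X^{q^n} − X)·f'`;
(3) `q^{n−1} ≤ deg f ≤ (q^n−1)/(q−1)`;
(4) `0 < deg f ≤ (q^n−1)/(q−1)`. -/
theorem stmt8 (q n : ℕ) (hq : IsPrimePow q) (hn : 1 ≤ n)
    {K : Type*} [Field K] [Fintype K] [DecidableEq K]
    (hK : Fintype.card K = q ^ n)
    (f : K[X]) (hf : 0 < f.natDegree)
    (hval : ∀ a : K, f.eval a ^ q = f.eval a) :
    List.TFAE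
      [ (Finset.univ.image fun a => f.eval a).card = (q ^ n - 1) / f.natDegree + 1 ∧
          (Finset.univ.image fun a => f.eval a).card = q,
        f ^ q - f = (X ^ q ^ n - X) * f.derivative,
        q ^ (n - 1) ≤ f.natDegree ∧ f.natDegree ≤ (q ^ n - 1) / (q - 1),
        0 < f.natDegree ∧ f.natDegree ≤ (q ^ n - 1) / (q - 1) ] := by
  classical
  set d := f.natDegree with hd
  set V := Finset.univ.image fun a => f.eval a with hV
  have hq2 : 2 ≤ q := hq.two_le
  have hqn2 : 2 ≤ q ^ n := by
    calc 2 ≤ q := hq2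
    _ = q ^ 1 := (pow_one q).symm
    _ ≤ q ^ n := Nat.pow_le_pow_right (by omega) hn
  -- `(q : K) = 0`
  have hcast : (q : K) = 0 := by
    have h0 : ((q ^ n : ℕ) : K) = 0 := by rw [← hK]; exact Nat.cast_card_eq_zero K
    have h1 : ((q : K)) ^ n = 0 := by exact_mod_cast h0
    exact pow_eq_zero_iff (by omega) |>.mp h1
  -- counting : `q ^ n ≤ V.card * d`
  have hcount : q ^ n ≤ V.card * d := by
    have hfib : ∀ c ∈ V, (Finset.univ.filter fun a => f.eval a = c).card ≤ d := by
      intro c _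
      have hsub : (Finset.univ.filter fun a => f.eval a = c)
          ⊆ (f - C c).roots.toFinset := by
        intro a ha
        simp only [Finset.mem_filter] at ha
        have hne : f - C c ≠ 0 := by
          intro h0
          have : (f - C c).natDegree = 0 := by rw [h0]; simp
          rw [natDegree_sub_C] at this
          omega
        rw [Multiset.mem_toFinset, mem_roots hne]
        simp [IsRoot, ha.2]
      calc (Finset.univ.filter fun a => f.eval a = c).card
          ≤ (f - C c).roots.toFinset.card := Finset.card_le_card hsub
        _ ≤ Multiset.card (f - C c).roots := Multiset.toFinset_card_le _
        _ ≤ (f - C c).natDegree := card_roots' _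
        _ = d := natDegree_sub_C
    calc q ^ n = Finset.univ.card := by rw [Finset.card_univ, hK]
      _ = ∑ c ∈ V, (Finset.univ.filter fun a => f.eval a = c).card :=
          Finset.card_eq_sum_card_fiberwise fun x _ =>
            Finset.mem_image_of_mem _ (Finset.mem_univ x)
      _ ≤ V.card * d := by
          simpa [mul_comm] using Finset.sum_le_card_nsmul V _ d hfib
  -- `V.card ≤ q`
  have hvq : V.card ≤ q := by
    have hXq : ((X : K[X]) ^ q - X).natDegree = q := by
      rw [natDegree_sub_eq_left_of_natDegree_lt] <;>
        simp [natDegree_X_pow]; omega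
    have hne : ((X : K[X]) ^ q - X) ≠ 0 := by
      intro h0
      rw [h0, natDegree_zero] at hXq; omega
    have hsub : V ⊆ ((X : K[X]) ^ q - X).roots.toFinset := by
      intro c hc
      rw [hV, Finset.mem_image] at hc
      obtain ⟨a, -, rfl⟩ := hc
      rw [Multiset.mem_toFinset, mem_roots hne]
      simp [IsRoot, hval a]
    calc V.card ≤ ((X : K[X]) ^ q - X).roots.toFinset.card := Finset.card_le_card hsub
      _ ≤ Multiset.card ((X : K[X]) ^ q - X).roots := Multiset.toFinset_card_le _
      _ ≤ ((X : K[X]) ^ q - X).natDegree := card_roots' _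
      _ = q := hXq
  -- the unconditional lower bound `q ^ (n-1) ≤ d`
  have hdlow : q ^ (n - 1) ≤ d := by
    have h1 : q ^ n ≤ q * d := hcount.trans (Nat.mul_le_mul_right d hvq)
    have h2 : q * q ^ (n - 1) = q ^ n := by
      rw [← pow_succ']; congr 1; omega
    rw [← h2] at h1
    exact Nat.le_of_mul_le_mul_left h1 (by omega)
  -- degree facts
  have hfqd : (f ^ q - f).natDegree = q * d := by
    have h1 : (f ^ q).natDegree = q * d := by rw [natDegree_pow]
    rw [natDegree_sub_eq_left_of_natDegree_lt, h1]
    rw [h1, ← hd]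
    have : d < q * d := by nlinarith
    omega
  have hMdeg : ((X : K[X]) ^ q ^ n - X).natDegree = q ^ n := by
    rw [natDegree_sub_eq_left_of_natDegree_lt] <;>
      simp [natDegree_X_pow]; omega
  have hMne : ((X : K[X]) ^ q ^ n - X) ≠ 0 := by
    intro h0; rw [h0, natDegree_zero] at hMdeg; omega
  tfae_have 3 → 4 := fun h => ⟨hf, h.2⟩
  tfae_have 4 → 3 := fun h => ⟨hdlow, h.2⟩
  tfae_have 4 → 1 := by
    rintro ⟨-, hub⟩
    have hub' : d * (q - 1) ≤ q ^ n - 1 := (Nat.le_div_iff_mul_le (by omega)).mp hub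
    have hVq : V.card = q := by
      by_contra hne
      have hle : V.card ≤ q - 1 := by omega
      have h1 : q ^ n ≤ (q - 1) * d := hcount.trans (Nat.mul_le_mul_right d hle)
      have h2 : (q - 1) * d ≤ q ^ n - 1 := by rw [mul_comm]; exact hub'
      omega
    have hqd : q ^ n ≤ q * d := by
      calc q ^ n ≤ V.card * d := hcount
        _ = q * d := by rw [hVq]
    have hdiv : (q ^ n - 1) / d = q - 1 := by
      apply Nat.div_eq_of_lt_le
      · rw [mul_comm]; exact hub'
      · have : (q - 1 + 1) * d = q * d := by congr 1; omega
        rw [this]; omega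
    exact ⟨by rw [hVq, hdiv]; omega, hVq⟩
  tfae_have 1 → 4 := by
    rintro ⟨h1, h2⟩
    refine ⟨hf, ?_⟩
    have hdiv : (q ^ n - 1) / d = q - 1 := by omega
    have h3 : (q ^ n - 1) / d * d ≤ q ^ n - 1 := Nat.div_mul_le_self _ _
    rw [hdiv] at h3
    exact (Nat.le_div_iff_mul_le (by omega)).mpr (by rw [mul_comm]; exact h3)
  tfae_have 2 → 4 := by
    intro h2
    refine ⟨hf, ?_⟩
    have hf' : f.derivative ≠ 0 := by
      intro h0
      rw [h0, mul_zero] at h2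
      have := hfqd
      rw [h2, natDegree_zero] at this
      nlinarith
    have hdeg : q * d = q ^ n + f.derivative.natDegree := by
      rw [h2, natDegree_mul hMne hf', hMdeg] at hfqd
      omega
    have hd' : f.derivative.natDegree < d := natDegree_derivative_lt (by omega)
    rw [Nat.le_div_iff_mul_le (by omega)]
    have key : d * (q - 1) + d = q * d := by
      zify [show 1 ≤ q by omega]
      ring
    -- linear arithmetic with atoms
    have : d * (q - 1) + d = q ^ n + f.derivative.natDegree := by rw [key, hdeg]
    omega
  tfae_have 4 → 2 := by
    rintro ⟨-, hub⟩
    have hub' : d * (q - 1) ≤ q ^ n - 1 := (Nat.le_div_iff_mul_le (by omega)).mp hub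
    have hdqn : d ≤ q ^ n - 1 := le_trans (Nat.le_mul_of_pos_right d (by omega)) hub'
    -- divisibility
    have hprod : (∏ a : K, (X - C a)) = (X : K[X]) ^ q ^ n - X := by
      have hmonic : ((X : K[X]) ^ q ^ n - X).Monic := by
        apply monic_X_pow_sub
        rw [degree_X]
        have h1 : (1 : ℕ) < q ^ n := hqn2
        exact_mod_cast h1
      have hroots : ((X : K[X]) ^ q ^ n - X).roots = Finset.univ.val := by
        have := FiniteField.roots_X_pow_card_sub_X K
        rwa [hK] at this
      have hcard : Multiset.card ((X : K[X]) ^ q ^ n - X).roots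
          = ((X : K[X]) ^ q ^ n - X).natDegree := by
        rw [hroots, hMdeg, ← Finset.card_def, Finset.card_univ, hK]
      have := prod_multiset_X_sub_C_of_monic_of_roots_card_eq hmonic hcard
      rw [hroots] at this
      rw [← this]
      rfl
    have hdvd : ((X : K[X]) ^ q ^ n - X) ∣ (f ^ q - f) := by
      rw [← hprod]
      apply Finset.prod_dvd_of_coprime
      · exact (pairwise_coprime_X_sub_C Function.injective_id).set_pairwise _
      · intro a _
        rw [dvd_iff_isRoot]
        simp [IsRoot, hval a]
    obtain ⟨h, hh⟩ := hdvd
    -- derivative computations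
    have hcastn : ((q ^ n : ℕ) : K) = 0 := by push_cast; rw [hcast]; exact zero_pow (by omega)
    have hDX : derivative ((X : K[X]) ^ q ^ n - X) = -1 := by
      rw [derivative_sub, derivative_X_pow, derivative_X, hcastn, map_zero, zero_mul,
        zero_sub]
    have hDf : derivative (f ^ q - f) = -f.derivative := by
      rw [derivative_sub, derivative_pow, hcast]
      simp
    have key : h - f.derivative = ((X : K[X]) ^ q ^ n - X) * derivative h := by
      have hD := congrArg derivative hh
      rw [hDf, derivative_mul, hDX] at hD
      linear_combination hD
    -- degree of h
    have hne0 : f ^ q - f ≠ 0 := by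
      intro h0
      rw [h0, natDegree_zero] at hfqd
      nlinarith
    have hh0 : h ≠ 0 := by
      rintro rfl
      rw [mul_zero] at hh
      exact hne0 hh
    have hdegh : q * d = q ^ n + h.natDegree := by
      rw [hh, natDegree_mul hMne hh0, hMdeg] at hfqd
      omega
    have hhlt : h.natDegree < q ^ n := by
      have key2 : d * (q - 1) + d = q * d := by
        zify [show 1 ≤ q by omega]
        ring
      have : d * (q - 1) + d = q ^ n + h.natDegree := by rw [key2, hdegh]
      omega
    have hDh : derivative h = 0 := by
      by_contra hne'
      have hRne : ((X : K[X]) ^ q ^ n - X) * derivative h ≠ 0 := mul_ne_zero hMne hne'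
      have hRdeg : (((X : K[X]) ^ q ^ n - X) * derivative h).natDegree
          = q ^ n + (derivative h).natDegree := by
        rw [natDegree_mul hMne hne', hMdeg]
      have hL : (h - f.derivative).natDegree < q ^ n := by
        calc (h - f.derivative).natDegree ≤ max h.natDegree f.derivative.natDegree :=
            natDegree_sub_le _ _
          _ < q ^ n := by
            have h1 : f.derivative.natDegree ≤ d - 1 := natDegree_derivative_le f
            have h2 : d - 1 < q ^ n := by omega
            exact max_lt hhlt (by omega)
      rw [key, hRdeg] at hL
      omega
    have : h = f.derivative := by
      have := key
      rw [hDh, mul_zero, sub_eq_zero] at this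
      exact this
    rw [hh, this]
  tfae_finish
end

section
/- Let K be a finite field with q^n elements and let f ∈ K[X] satisfy deg f ≤ q^n − 1 and f^q ≡ f (mod X^{q^n} − X). If the coefficient of X^{kq+1} in f is α ≠ 0 (for some integer k ≥ 0 with kq+1 ≤ q^n − 1), then the coefficient of X^{k + q^{n−1}} in f equals α^{q^{n−1}}. -/
open Polynomial Finset

/-! For `f` of degree `< |K|` and `0 < m < |K|`, the orthogonality relation
`∑_{c ∈ K} c ^ j = -1` if `j ≠ 0` and `|K| - 1 ∣ j`, `0` otherwise, gives
`f_m = -∑_c f(c) c ^ (|K| - 1 - m)`. The congruence makes every value `f(c)` fixed by `x ↦ x ^ q`,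
hence by the field endomorphism `φ : x ↦ x ^ q ^ (n - 1)`. Applying `φ` to the formula for
`f_{kq+1}` replaces the exponent `|K| - 1 - (kq + 1)` by its product with `q ^ (n - 1)`, which
acts on `c` as the exponent `|K| - 1 - (k + q ^ (n - 1))`, since
`(kq + 1) q ^ (n - 1) = k q ^ n + q ^ (n - 1) ≡ k + q ^ (n - 1) (mod q ^ n - 1)`. -/

namespace Nat

variable {r a b t : ℕ}

theorem sub_mul_modEq_sub_of_mul_modEq (ha : a ≤ r) (hb : b ≤ r) (hab : a * t ≡ b [MOD r]) :
    (r - a) * t ≡ r - b [MOD r] := by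
  refine hab.add_right_cancel ?_
  rw [← add_mul, Nat.sub_add_cancel ha, Nat.sub_add_cancel hb]
  exact (modEq_zero_iff_dvd.mpr (dvd_mul_right r t)).trans (modEq_zero_iff_dvd.mpr dvd_rfl).symm

theorem sub_mul_eq_zero_iff_of_mul_modEq (ht0 : t ≠ 0) (ht : t.Coprime r) (ha0 : a ≠ 0)
    (ha : a ≤ r) (hb0 : b ≠ 0) (hb : b ≤ r) (hab : a * t ≡ b [MOD r]) :
    (r - a) * t = 0 ↔ r - b = 0 := by
  rw [mul_eq_zero, or_iff_left ht0]
  constructor <;> intro h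
  · have hdvd : r ∣ b := by
      rw [← modEq_zero_iff_dvd]
      refine hab.symm.trans (modEq_zero_iff_dvd.mpr ?_)
      rw [show a = r by omega]
      exact dvd_mul_right r t
    have := le_of_dvd (pos_of_ne_zero hb0) hdvd
    omega
  · have hdvd : r ∣ a * t := by
      rw [← modEq_zero_iff_dvd]
      exact hab.trans (modEq_zero_iff_dvd.mpr (by rw [show b = r by omega]))
    have := le_of_dvd (pos_of_ne_zero ha0) (ht.symm.dvd_of_dvd_mul_right hdvd)
    omega

theorem add_pow_pred_lt_pow {q n k : ℕ} (hq : 2 ≤ q) (hn : n ≠ 0) (hk : k * q + 1 ≤ q ^ n - 1) :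
    k + q ^ (n - 1) < q ^ n := by
  rw [← mul_pow_sub_one hn] at hk ⊢
  generalize q ^ (n - 1) = Q at *
  have : 2 * Q ≤ q * Q := Nat.mul_le_mul_right Q hq
  have : k < Q := Nat.lt_of_mul_lt_mul_left (a := q) (by rw [mul_comm q k]; omega)
  omega

theorem mul_add_one_mul_pow_pred_modEq {q n : ℕ} (k : ℕ) (hq : 1 ≤ q) (hn : n ≠ 0) :
    (k * q + 1) * q ^ (n - 1) ≡ k + q ^ (n - 1) [MOD q ^ n - 1] := by
  have hQ : 1 ≤ q ^ (n - 1) := Nat.one_le_pow _ _ hq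
  rw [← mul_pow_sub_one hn]
  generalize q ^ (n - 1) = Q at *
  have : (k * q + 1) * Q = k + Q + (q * Q - 1) * k := by
    zify [Nat.one_le_iff_ne_zero.mpr (Nat.mul_ne_zero (by omega) (by omega) : q * Q ≠ 0)]
    ring
  rw [this]
  exact Nat.add_mul_mod_self_left ..

end Nat

namespace FiniteField

variable {K : Type*} [Field K] [Fintype K]

theorem sum_pow_eq_ite (j : ℕ) :
    ∑ c : K, c ^ j = if j ≠ 0 ∧ Fintype.card K - 1 ∣ j then -1 else 0 := by
  classical
  rcases eq_or_ne j 0 with rfl | hj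
  · simp
  let ι : Kˣ ↪ K := ⟨(↑), Units.val_injective⟩
  have hι : univ.map ι = univ \ {0} := by
    ext x
    simpa only [mem_map, mem_univ, true_and, mem_sdiff, mem_singleton] using! isUnit_iff_ne_zero
  calc ∑ c : K, c ^ j = ∑ c ∈ univ \ {(0 : K)}, c ^ j := by
        rw [← sum_sdiff ({0} : Finset K).subset_univ, sum_singleton, zero_pow hj, add_zero]
    _ = ∑ u : Kˣ, (u : K) ^ j := by rw [← hι, sum_map]; rfl
    _ = _ := by simp [sum_pow_units, hj]

theorem coeff_eq_neg_sum_eval_mul_pow (f : K[X]) (hf : f.natDegree < Fintype.card K)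
    {m : ℕ} (hm0 : m ≠ 0) (hm : m < Fintype.card K) :
    f.coeff m = -∑ c : K, f.eval c * c ^ (Fintype.card K - 1 - m) := by
  set r := Fintype.card K - 1
  have hexp : ∀ i < Fintype.card K, (i + (r - m) ≠ 0 ∧ r ∣ i + (r - m)) ↔ i = m := by
    refine fun i hi ↦ ⟨fun ⟨h0, hdvd⟩ ↦ ?_, fun h ↦ ?_⟩
    · have := Nat.eq_of_dvd_of_lt_two_mul h0 hdvd (by omega)
      omega
    · subst h
      exact ⟨by omega, by rw [Nat.add_sub_cancel' (by omega)]⟩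
  calc f.coeff m = -∑ i ∈ range (Fintype.card K), f.coeff i * ∑ c : K, c ^ (i + (r - m)) := by
        simp_rw [sum_pow_eq_ite]
        rw [sum_congr rfl fun i hi ↦ by rw [if_congr (hexp i (mem_range.mp hi)) rfl rfl],
          sum_eq_single_of_mem m (mem_range.mpr hm) fun i _ hi ↦ by simp [hi]]
        simp
    _ = _ := by
        simp_rw [eval_eq_sum_range' hf, sum_mul, mul_sum, mul_assoc, ← pow_add]
        rw [sum_comm]

theorem pow_eq_pow_of_modEq (c : K) {a b : ℕ} (h : a ≡ b [MOD Fintype.card K - 1])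
    (h0 : a = 0 ↔ b = 0) : c ^ a = c ^ b := by
  rcases eq_or_ne c 0 with rfl | hc
  · by_cases ha : a = 0
    · rw [ha, h0.mp ha]
    · rw [zero_pow ha, zero_pow (mt h0.mpr ha)]
  · have hord := orderOf_dvd_of_pow_eq_one (pow_card_sub_one_eq_one c hc)
    rw [← pow_mod_orderOf, h.of_dvd hord, pow_mod_orderOf]

theorem eval_pow_pow_eq_self_of_dvd (g : K[X]) {q : ℕ}
    (hg : (X ^ Fintype.card K - X : K[X]) ∣ g ^ q - g) (j : ℕ) (c : K) :
    g.eval c ^ q ^ j = g.eval c := by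
  have hfix : g.eval c ^ q = g.eval c := by
    obtain ⟨h, hh⟩ := hg
    simpa [pow_card, sub_eq_zero] using congrArg (eval c) hh
  induction j with
  | zero => simp
  | succ j ih => rw [pow_succ, pow_mul, ih, hfix]

theorem coeff_pow_char_pow_eq_coeff {p : ℕ} [Fact p.Prime] [CharP K p] (s : ℕ) (f : K[X])
    (hf : f.natDegree < Fintype.card K) (hfix : ∀ c, f.eval c ^ p ^ s = f.eval c)
    {a b : ℕ} (ha0 : a ≠ 0) (ha : a < Fintype.card K) (hb0 : b ≠ 0) (hb : b < Fintype.card K)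
    (hab : a * p ^ s ≡ b [MOD Fintype.card K - 1]) :
    f.coeff a ^ p ^ s = f.coeff b := by
  set r := Fintype.card K - 1
  have hr : r + 1 = Fintype.card K := Nat.sub_add_cancel Fintype.card_pos
  have hcop : (p ^ s).Coprime r := by
    refine Nat.Coprime.pow_left s (Nat.Coprime.coprime_dvd_left (k := r + 1) ?_ ?_)
    · rw [← CharP.cast_eq_zero_iff K, hr, cast_card_eq_zero]
    · rw [Nat.coprime_self_add_left]; exact Nat.coprime_one_left r
  have hmod := Nat.sub_mul_modEq_sub_of_mul_modEq (by omega) (by omega) hab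
  have hzero := Nat.sub_mul_eq_zero_iff_of_mul_modEq (pow_ne_zero s (Fact.out : p.Prime).ne_zero)
    hcop ha0 (by omega) hb0 (by omega) hab
  calc f.coeff a ^ p ^ s
      = iterateFrobenius K p s (-∑ c : K, f.eval c * c ^ (r - a)) := by
        rw [iterateFrobenius_def, ← coeff_eq_neg_sum_eval_mul_pow f hf ha0 ha]
    _ = -∑ c : K, f.eval c * c ^ (r - b) := by
        simp only [map_neg, map_sum, map_mul, map_pow, iterateFrobenius_def, hfix, ← pow_mul]
        simp_rw [mul_comm (p ^ s), pow_eq_pow_of_modEq _ hmod hzero]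
    _ = f.coeff b := (coeff_eq_neg_sum_eval_mul_pow f hf hb0 hb).symm

end FiniteField

theorem stmt9_general (q n : ℕ) (hq : IsPrimePow q) (hn : 1 ≤ n)
    {K : Type*} [Field K] [Fintype K] (hK : Fintype.card K = q ^ n)
    (f : K[X]) (hdeg : f.natDegree ≤ q ^ n - 1)
    (hcong : (X ^ q ^ n - X : K[X]) ∣ f ^ q - f)
    (k : ℕ) (hk : k * q + 1 ≤ q ^ n - 1)
    (α : K) (hcoeff : f.coeff (k * q + 1) = α) :
    f.coeff (k + q ^ (n - 1)) = α ^ q ^ (n - 1) := by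
  obtain ⟨p, e, hp, he, hpe⟩ := hq
  replace hp := Nat.prime_iff.mpr hp
  have := Fact.mk hp
  have : CharP K p := charP_of_card_eq_prime_pow (by rw [hK, ← hpe, ← pow_mul])
  have hq2 : 2 ≤ q := hpe ▸ hp.two_le.trans (Nat.le_self_pow he.ne' p)
  have hQ : q ^ (n - 1) = p ^ (e * (n - 1)) := by rw [pow_mul, hpe]
  have hb := Nat.add_pow_pred_lt_pow hq2 (by omega) hk
  have hmod := Nat.mul_add_one_mul_pow_pred_modEq k (by omega : 1 ≤ q) (by omega : n ≠ 0)
  have hfix := FiniteField.eval_pow_pow_eq_self_of_dvd f (hK ▸ hcong) (n - 1)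
  rw [hQ] at hb hmod hfix ⊢
  rw [← hK] at hdeg hk hb hmod
  rw [← hcoeff, FiniteField.coeff_pow_char_pow_eq_coeff _ f (by omega) hfix (by omega) (by omega)
    (by have := pow_pos hp.pos (e * (n - 1)); omega) hb hmod]

/-- Let `K` have `q^n` elements and let `f ∈ K[X]` satisfy
`deg f ≤ q^n − 1` and `f^q ≡ f (mod X^{q^n} − X)`. If the coefficient of `X^{kq+1}`
in `f` is `α ≠ 0` (with `kq + 1 ≤ q^n − 1`), then the coefficient of `X^{k+q^{n−1}}`
in `f` equals `α^{q^{n−1}}`. -/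
theorem stmt9 (q n : ℕ) (hq : IsPrimePow q) (hn : 1 ≤ n)
    {K : Type*} [Field K] [Fintype K] (hK : Fintype.card K = q ^ n)
    (f : K[X]) (hdeg : f.natDegree ≤ q ^ n - 1)
    (hcong : (X ^ q ^ n - X : K[X]) ∣ f ^ q - f)
    (k : ℕ) (hk : k * q + 1 ≤ q ^ n - 1)
    (α : K) (hα : α ≠ 0) (hcoeff : f.coeff (k * q + 1) = α) :
    f.coeff (k + q ^ (n - 1)) = α ^ q ^ (n - 1) :=
  stmt9_general q n hq hn hK f hdeg hcong k hk α hcoeff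
end

section
/- Let K be a finite field with q^n elements and let f ∈ K[X] satisfy f^q − f = (X^{q^n} − X)·f′. Write f = A + B where A is the sum of all monomials of f of degree ≥ q^{n−1} (i.e., A has the same coefficients as f in degrees ≥ q^{n−1} and zero coefficients below) and B = f − A. Then A^q = X^{q^n}·f′ and f = X·f′ + B^q. -/
open Polynomial

/-- Let `K` have `q^n` elements and `f ∈ K[X]` with
`f^q − f = (X^{q^n} − X)·f'`. Write `f = A + B` where `A` consists of the monomials
of `f` of degree `≥ q^{n−1}` and `B = f − A`. Then `A^q = X^{q^n}·f'` and
`f = X·f' + B^q`. -/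
theorem stmt10 (q n : ℕ) (hq : IsPrimePow q) (hn : 1 ≤ n)
    {K : Type*} [Field K] [Fintype K] (hK : Fintype.card K = q ^ n)
    (f A B : K[X])
    (heq : f ^ q - f = (X ^ q ^ n - X) * f.derivative)
    (hA1 : ∀ i, q ^ (n - 1) ≤ i → A.coeff i = f.coeff i)
    (hA2 : ∀ i, i < q ^ (n - 1) → A.coeff i = 0)
    (hB : B = f - A) :
    A ^ q = X ^ q ^ n * f.derivative ∧ f = X * f.derivative + B ^ q := by
  obtain ⟨p, k, hp, hk, hpk⟩ := hq
  have hpprime : p.Prime := hp.nat_prime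
  haveI : Fact p.Prime := ⟨hpprime⟩
  have hq2 : 2 ≤ q := by
    rw [← hpk]
    calc 2 ≤ p := hpprime.two_le
      _ ≤ p ^ k := Nat.le_self_pow hk.ne' p
  have hqn2 : 2 ≤ q ^ n := le_trans hq2 (Nat.le_self_pow (by omega) q)
  -- characteristic p
  haveI := ringChar.charP K
  obtain ⟨m, hrprime, hcard⟩ := FiniteField.card K (ringChar K)
  have hrp : ringChar K = p := by
    have h1 : ringChar K ∣ p ^ (k * n) := by
      rw [pow_mul, hpk, ← hK, hcard]
      exact dvd_pow_self _ (by positivity)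
    exact (Nat.prime_dvd_prime_iff_eq hrprime hpprime).mp (hrprime.dvd_of_dvd_pow h1)
  haveI : CharP K p := hrp ▸ ringChar.charP K
  haveI : CharP K[X] p := Polynomial.instCharP p
  -- degree bound
  have hdlt : f.natDegree < q ^ n := by
    rcases eq_or_ne f.derivative 0 with h0 | h0
    · have hfq : f ^ q = f := by
        have : f ^ q - f = 0 := by rw [heq, h0, mul_zero]
        linear_combination this
      have h2 := congrArg natDegree hfq
      rw [natDegree_pow] at h2
      nlinarith [f.natDegree.zero_le]
    · rcases Nat.eq_zero_or_pos f.natDegree with hd0 | hd1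
      · omega
      · have hXq : (X ^ q ^ n - X : K[X]).natDegree = q ^ n := by
          rw [natDegree_sub_eq_left_of_natDegree_lt, natDegree_X_pow]
          rw [natDegree_X, natDegree_X_pow]; omega
        have hXqne : (X ^ q ^ n - X : K[X]) ≠ 0 := by
          intro h; rw [h, natDegree_zero] at hXq; omega
        have hL : (f ^ q - f).natDegree = q * f.natDegree := by
          rw [natDegree_sub_eq_left_of_natDegree_lt, natDegree_pow]
          rw [natDegree_pow]; nlinarith
        have hR : ((X ^ q ^ n - X) * f.derivative).natDegree
            = q ^ n + f.derivative.natDegree := by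
          rw [natDegree_mul hXqne h0, hXq]
        have he : q * f.natDegree = q ^ n + f.derivative.natDegree := by
          rw [← hL, heq, hR]
        have hed : f.derivative.natDegree ≤ f.natDegree - 1 := natDegree_derivative_le f
        have hed' : f.derivative.natDegree + 1 ≤ f.natDegree := by omega
        by_contra hcon
        push_neg at hcon
        have h2d : 2 * f.natDegree ≤ q * f.natDegree :=
          Nat.mul_le_mul_right _ hq2
        linarith
    -- derivative degree bound
  have hed : f.derivative.natDegree ≤ f.natDegree - 1 := natDegree_derivative_le f
  -- Frobenius
  have hfAB : f = A + B := by rw [hB]; ring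
  have hfrob : f ^ q = A ^ q + B ^ q := by
    rw [hfAB, ← hpk, add_pow_char_pow]
  -- A^q is divisible by X^(q^n)
  obtain ⟨C, hC⟩ : (X : K[X]) ^ q ^ (n - 1) ∣ A := X_pow_dvd_iff.mpr fun d hd => hA2 d hd
  have hAq : A ^ q = X ^ q ^ n * C ^ q := by
    rw [hC, mul_pow, ← pow_mul]
    congr 2
    rw [← pow_succ]
    congr 1
    omega
  -- B^q has low degree
  have hBdeg : ∀ j, q ^ n ≤ j → (B ^ q).coeff j = 0 := by
    intro j hj
    apply coeff_eq_zero_of_natDegree_lt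
    have h1 : B.natDegree ≤ q ^ (n - 1) - 1 := by
      apply natDegree_le_iff_coeff_eq_zero.mpr
      intro N hN
      have hN' : q ^ (n - 1) ≤ N := by
        have : 1 ≤ q ^ (n - 1) := Nat.one_le_pow _ _ (by omega)
        omega
      rw [hB, coeff_sub, hA1 N hN', sub_self]
    calc (B ^ q).natDegree ≤ q * B.natDegree := natDegree_pow_le
      _ ≤ q * (q ^ (n - 1) - 1) := Nat.mul_le_mul_left q h1
      _ < q * q ^ (n - 1) := by
          refine (mul_lt_mul_iff_right₀ (show (0:ℕ) < q by omega)).mpr ?_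
          have hx : 1 ≤ q ^ (n - 1) := Nat.one_le_pow _ _ (by omega)
          omega
      _ = q ^ n := by rw [← pow_succ']; congr 1; omega
      _ ≤ j := hj
  -- key identity
  have hkey : A ^ q - X ^ q ^ n * f.derivative = (f - X * f.derivative) - B ^ q := by
    have h2 : A ^ q + B ^ q - f = X ^ q ^ n * f.derivative - X * f.derivative := by
      rw [← hfrob]; linear_combination heq
    linear_combination h2
  have hzero : A ^ q - X ^ q ^ n * f.derivative = 0 := by
    ext j
    rw [coeff_zero]
    rcases lt_or_ge j (q ^ n) with hj | hj
    · rw [coeff_sub, hAq]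
      rw [X_pow_dvd_iff.mp (dvd_mul_right _ (C ^ q)) j hj,
        X_pow_dvd_iff.mp (dvd_mul_right _ f.derivative) j hj, sub_self]
    · rw [hkey, coeff_sub, coeff_sub, hBdeg j hj,
        coeff_eq_zero_of_natDegree_lt (lt_of_lt_of_le hdlt hj)]
      have hXf : (X * f.derivative).natDegree < j := by
        calc (X * f.derivative).natDegree ≤ 1 + f.derivative.natDegree :=
          le_trans natDegree_mul_le (by rw [natDegree_X])
        _ < q ^ n := by omega
        _ ≤ j := hj
      rw [coeff_eq_zero_of_natDegree_lt hXf]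
      ring
  constructor
  · exact sub_eq_zero.mp hzero
  · have h3 : (f - X * f.derivative) - B ^ q = 0 := hkey ▸ hzero
    linear_combination h3
end

section
/- Let K be a finite field with q^n elements and let f ∈ K[X] satisfy f^q − f = (X^{q^n} − X)·f′. If the coefficient of X^k in f is nonzero, then k can be written as k = a_{n−1}q^{n−1} + a_{n−2}q^{n−2} + ⋯ + a_1 q + a_0 with each a_i ∈ {0,1}; that is, every base-q digit of k is 0 or 1. -/
/-!
Write `g = f ^ q`, `N = q ^ n` and `c_m` for the coefficients of `f`. Comparing degrees gives
`deg f < N`, and comparing the coefficients of `g - f = (X ^ N - X) f'` at `m` and at `m - 1 + N`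
gives `c_m = g_m + g_(m-1+N)` for `0 < m < N`. In characteristic `p` with `q = p ^ e`,
`g_j = c_(j/q) ^ q` if `q ∣ j` and `g_j = 0` otherwise. Hence, for `m = q u + r` with
`c_m ≠ 0`, we get `r ≤ 1` and `c_(u + r q^(n-1)) ≠ 0`: the support of `f` consists of numbers
below `N` whose last base-`q` digit is `0` or `1`, and it is closed under the cyclic rotation of
their `n` digits.
-/

open Polynomial Finset

theorem Nat.add_mul_pow_succ_div_pow_mod (a b i : ℕ) {q : ℕ} (hq : 0 < q) :
    (a + b * q ^ (i + 1)) / q ^ i % q = a / q ^ i % q := by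
  rw [pow_succ', ← mul_assoc, Nat.add_mul_div_right _ _ (pow_pos hq i),
    Nat.add_mul_mod_self_right]

theorem Nat.eq_sum_range_div_pow_mod_mul_pow {q m n : ℕ} (hm : m < q ^ n) :
    m = ∑ i ∈ range n, m / q ^ i % q * q ^ i := by
  suffices ∀ n, m % q ^ n = ∑ i ∈ range n, m / q ^ i % q * q ^ i by
    rw [← this, Nat.mod_eq_of_lt hm]
  intro n
  induction n with
  | zero => simp [Nat.mod_one]
  | succ n ih => rw [Nat.mod_pow_succ, ih, sum_range_succ, mul_comm (q ^ n)]

namespace Polynomial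

theorem coeff_pow_expChar_pow {R : Type*} [CommSemiring R] {p : ℕ} [ExpChar R p]
    (f : R[X]) (e m : ℕ) :
    (f ^ p ^ e).coeff m = if p ^ e ∣ m then f.coeff (m / p ^ e) ^ p ^ e else 0 := by
  rw [← map_iterateFrobenius_expand, coeff_map, coeff_expand (expChar_pow_pos R p e)]
  split_ifs <;> simp [iterateFrobenius_def, zero_pow (expChar_pow_pos R p e).ne']

variable {R : Type*} [CommRing R] {f g : R[X]} {N : ℕ}

theorem natDegree_lt_of_pow_sub_self_eq [IsDomain R] {q : ℕ} (hq : 2 ≤ q) (hN : 1 ≤ N)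
    (h : f ^ q - f = (X ^ N - X) * derivative f) : f.natDegree < N := by
  rcases Nat.eq_zero_or_pos f.natDegree with hf | hf
  · omega
  have hlt : f.natDegree < (f ^ q).natDegree := by rw [natDegree_pow]; nlinarith
  have hlhs : (f ^ q - f).natDegree = q * f.natDegree := by
    rw [natDegree_sub_eq_left_of_natDegree_lt hlt, natDegree_pow]
  have hrhs : ((X ^ N - X) * derivative f).natDegree ≤ N + (f.natDegree - 1) := by
    refine natDegree_mul_le.trans (add_le_add ?_ (natDegree_derivative_le f))
    exact (natDegree_sub_le _ _).trans (by simp [hN])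
  rw [← h, hlhs] at hrhs
  have hd : f.natDegree ≤ (q - 1) * f.natDegree := Nat.le_mul_of_pos_left _ (by omega)
  have hqd : q * f.natDegree = (q - 1) * f.natDegree + f.natDegree := by
    rw [← Nat.succ_mul, Nat.succ_eq_add_one, Nat.sub_add_cancel (by omega)]
  omega

theorem lt_of_coeff_ne_zero_of_pow_sub_self_eq [IsDomain R] {q : ℕ} (hq : 2 ≤ q) (hN : 1 ≤ N)
    (h : f ^ q - f = (X ^ N - X) * derivative f) {m : ℕ} (hm : f.coeff m ≠ 0) : m < N :=
  (le_natDegree_of_ne_zero hm).trans_lt (natDegree_lt_of_pow_sub_self_eq hq hN h)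

theorem coeff_succ_eq_coeff_add_coeff (h : g - f = (X ^ N - X) * derivative f)
    (hf : f.natDegree < N) {j : ℕ} (hj : j + 1 < N) :
    f.coeff (j + 1) = g.coeff (j + 1) + g.coeff (j + N) := by
  obtain ⟨M, rfl⟩ : ∃ M, N = M + 1 := ⟨N - 1, by omega⟩
  have hlow := congrArg (coeff · (j + 1)) h
  have hhigh := congrArg (coeff · (j + M + 1)) h
  simp only [sub_mul, coeff_sub, coeff_X_pow_mul', coeff_X_mul, coeff_derivative] at hlow hhigh
  rw [if_neg (by omega)] at hlow
  rw [if_pos (by omega), show j + M + 1 - (M + 1) = j by omega,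
    coeff_eq_zero_of_natDegree_lt (by omega : f.natDegree < j + M + 1)] at hhigh
  rw [← add_assoc]
  linear_combination -hlow - hhigh

theorem coeff_pow_expChar_pow_mul_add {S : Type*} [CommSemiring S] {p : ℕ} [ExpChar S p]
    (f : S[X]) {e a r : ℕ} (hr : r < p ^ e) :
    (f ^ p ^ e).coeff (p ^ e * a + r) = if r = 0 then f.coeff a ^ p ^ e else 0 := by
  rw [coeff_pow_expChar_pow]
  by_cases hr0 : r = 0
  · simp [hr0, Nat.mul_div_cancel_left _ (expChar_pow_pos S p e)]
  · have hndvd : ¬p ^ e ∣ p ^ e * a + r := by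
      rw [Nat.dvd_add_right (dvd_mul_right _ _)]
      exact fun hdvd => hr0 (Nat.eq_zero_of_dvd_of_lt hdvd hr)
    rw [if_neg hndvd, if_neg hr0]

theorem mod_le_one_and_coeff_div_add_mul_ne_zero [IsDomain R] {p : ℕ} [ExpChar R p] {e n : ℕ}
    (hq : 2 ≤ p ^ e) (hn : n ≠ 0) (h : f ^ p ^ e - f = (X ^ (p ^ e) ^ n - X) * derivative f)
    {m : ℕ} (hm : f.coeff m ≠ 0) :
    m % p ^ e ≤ 1 ∧ f.coeff (m / p ^ e + m % p ^ e * (p ^ e) ^ (n - 1)) ≠ 0 := by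
  set q := p ^ e
  have hdeg := natDegree_lt_of_pow_sub_self_eq hq (Nat.one_le_pow _ _ (by omega)) h
  have hmN := (le_natDegree_of_ne_zero hm).trans_lt hdeg
  have hN : q ^ n = q * q ^ (n - 1) := by rw [← pow_succ']; congr 1; omega
  rcases Nat.eq_zero_or_pos m with rfl | hm0
  · simpa using hm
  obtain ⟨u, r, hr, rfl⟩ : ∃ u r, r < q ∧ m = q * u + r :=
    ⟨m / q, m % q, Nat.mod_lt m (by omega), (Nat.div_add_mod m q).symm⟩
  rw [Nat.mul_add_div (by omega), Nat.div_eq_of_lt hr, add_zero, Nat.mul_add_mod,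
    Nat.mod_eq_of_lt hr]
  have hsplit := coeff_succ_eq_coeff_add_coeff h hdeg (j := q * u + r - 1) (by omega)
  rw [Nat.sub_add_cancel hm0, coeff_pow_expChar_pow_mul_add f hr] at hsplit
  rcases Nat.eq_zero_or_pos r with rfl | hr0
  · simp only [add_zero, zero_mul, ↓reduceIte] at hm hm0 hsplit ⊢
    have hu : q ≤ q * u :=
      Nat.le_mul_of_pos_right q (Nat.pos_of_ne_zero (by rintro rfl; simp at hm0))
    have hhigh : q * u - 1 + q ^ n = q * (u - 1 + q ^ (n - 1)) + (q - 1) := by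
      rw [hN, mul_add, Nat.mul_sub_one]; omega
    rw [hhigh, coeff_pow_expChar_pow_mul_add f (by omega), if_neg (show q - 1 ≠ 0 by omega),
      add_zero] at hsplit
    refine ⟨zero_le_one, fun hzero => hm ?_⟩
    rw [hsplit, hzero, zero_pow (by omega)]
  · have hhigh : q * u + r - 1 + q ^ n = q * (u + q ^ (n - 1)) + (r - 1) := by
      rw [hN, mul_add]; omega
    rw [hhigh, coeff_pow_expChar_pow_mul_add f (by omega), if_neg (by omega), zero_add] at hsplit
    obtain rfl : r = 1 := by
      by_contra hr1
      rw [if_neg (by omega)] at hsplit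
      exact hm hsplit
    rw [if_pos rfl] at hsplit
    refine ⟨le_rfl, fun hzero => hm ?_⟩
    rw [hsplit, ← one_mul (q ^ (n - 1)), hzero, zero_pow (by omega)]

theorem div_pow_mod_le_one_of_coeff_ne_zero [IsDomain R] {p : ℕ} [ExpChar R p] {e n : ℕ}
    (hq : 2 ≤ p ^ e) (hn : n ≠ 0) (h : f ^ p ^ e - f = (X ^ (p ^ e) ^ n - X) * derivative f)
    (i : ℕ) {m : ℕ} (hm : f.coeff m ≠ 0) : m / (p ^ e) ^ i % p ^ e ≤ 1 := by
  set q := p ^ e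
  induction i generalizing m with
  | zero => simpa using (mod_le_one_and_coeff_div_add_mul_ne_zero hq hn h hm).1
  | succ i ih =>
    by_cases hin : i + 1 < n
    · have hrot := ih (mod_le_one_and_coeff_div_add_mul_ne_zero hq hn h hm).2
      have hshift : m % q * q ^ (n - 1) = m % q * q ^ (n - 2 - i) * q ^ (i + 1) := by
        rw [mul_assoc, ← pow_add]; congr 2; omega
      rwa [hshift, Nat.add_mul_pow_succ_div_pow_mod _ _ _ (by omega), Nat.div_div_eq_div_mul,
        ← pow_succ'] at hrot
    · have hmN : m < q ^ (i + 1) :=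
        (lt_of_coeff_ne_zero_of_pow_sub_self_eq hq (Nat.one_le_pow _ _ (by omega)) h hm).trans_le
          (Nat.pow_le_pow_right (by omega) (by omega))
      simp [Nat.div_eq_of_lt hmN]

end Polynomial

/-- Let `K` have `q^n` elements and `f ∈ K[X]` with
`f^q − f = (X^{q^n} − X)·f'`. If the coefficient of `X^k` in `f` is nonzero, then
`k = a_{n−1}q^{n−1} + ⋯ + a_1 q + a_0` with all `a_i ∈ {0,1}`. -/
theorem stmt11 (q n : ℕ) (hq : IsPrimePow q) (hn : 1 ≤ n)
    {K : Type*} [Field K] [Fintype K] (hK : Fintype.card K = q ^ n)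
    (f : K[X]) (heq : f ^ q - f = (X ^ q ^ n - X) * f.derivative)
    (k : ℕ) (hk : f.coeff k ≠ 0) :
    ∃ a : ℕ → ℕ, (∀ i, a i ≤ 1) ∧ k = ∑ i ∈ Finset.range n, a i * q ^ i := by
  obtain ⟨p, e, hp, he, rfl⟩ := hq
  have hp : p.Prime := Nat.prime_iff.mpr hp
  have := Fact.mk hp
  have : CharP K p := charP_of_card_eq_prime_pow (f := e * n) (by rw [hK, pow_mul])
  have hq : 2 ≤ p ^ e := hp.two_le.trans (Nat.le_self_pow he.ne' p)
  refine ⟨fun i => k / (p ^ e) ^ i % p ^ e,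
    fun i => div_pow_mod_le_one_of_coeff_ne_zero hq (by omega) heq i hk, ?_⟩
  exact Nat.eq_sum_range_div_pow_mod_mul_pow
    (lt_of_coeff_ne_zero_of_pow_sub_self_eq hq (Nat.one_le_pow _ _ (by omega)) heq hk)
end

section
/- Let K be a finite field with q^n elements. For an integer k with base-q expansion k = Σ_{j=0}^{n−1} a_j q^j where every a_j ∈ {0,1}, and for 0 ≤ i ≤ n−1, let k^{(i)} = Σ_{j=0}^{n−1} a_{(j−i) mod n} q^j be the i-th cyclic shift of the digit vector of k; for α ∈ K set H_{α,k} = Σ_{i=0}^{n−1} α^{q^i}·X^{k^{(i)}}. Then a polynomial f ∈ K[X] satisfies f^q − f = (X^{q^n} − X)·f′ if and only if f is a finite sum of polynomials of the form H_{α,k} with α ∈ K and k having all base-q digits in {0,1}. -/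
open Polynomial

/-- The `i`-th cyclic shift of the base-`q` digit vector `(a 0, …, a (n−1))`,
read off as a natural number: `k^{(i)} = Σ_{j<n} a_{(j−i) mod n} q^j`. -/
def shiftExp (q n : ℕ) (a : ℕ → ℕ) (i : ℕ) : ℕ :=
  ∑ j ∈ Finset.range n, a ((j + n - i) % n) * q ^ j

/-- The polynomial `H_{α,k} = Σ_{i<n} α^{q^i} · X^{k^{(i)}}`, where `k` is encoded by
its base-`q` digit vector `a`. -/
noncomputable def Hpoly (q n : ℕ) {K : Type*} [Field K] (α : K) (a : ℕ → ℕ) : K[X] :=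
  ∑ i ∈ Finset.range n, C (α ^ q ^ i) * X ^ shiftExp q n a i

/-!
Write `f = Σ c_k X^k`. Comparing degrees in the equation gives `(q - 1) deg f < q^n`, and
comparing coefficients gives `c_{ρ k} = c_k^q`, where `ρ` rotates the `n` base-`q` digits of `k`,
as well as `c_k = 0` whenever the units digit of `k` is at least `2`. Since `ρ` brings every digit
to the units place, the support of `f` consists of exponents with all digits in `{0, 1}`. Along
the `ρ`-orbit of the leading exponent `d` the coefficients are `c_d^{q^i}`; if `t` is the period
of `d`, then `c_d ∈ 𝔽_{q^t}` is a trace `Σ_j α^{q^{tj}}` from `K`, and `f - H_{α,d}` is a solution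
of lower degree. Conversely, `q`-th powering sends each term of `H_{α,k}` to the next term plus
`(X^{q^n} - X)` times its derivative, and solutions are closed under sums.
-/

open Finset Function

/-- For `k < q ^ n`: the cyclic rotation of the `n` base-`q` digits of `k` moving every digit up
one place and the top digit to the units place. -/
def digitRotate (q n k : ℕ) : ℕ :=
  q * (k % q ^ (n - 1)) + k / q ^ (n - 1)

lemma mul_add_div_eq_digitRotate_add {q n : ℕ} (hn : n ≠ 0) (k : ℕ) :
    q * k + k / q ^ (n - 1) = digitRotate q n k + k / q ^ (n - 1) * q ^ n := by
  have hpow : q ^ n = q * q ^ (n - 1) := by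
    rw [← pow_succ', Nat.sub_add_cancel (Nat.one_le_iff_ne_zero.2 hn)]
  nth_rw 1 [← Nat.mod_add_div k (q ^ (n - 1))]
  rw [digitRotate, hpow]
  ring

lemma sum_mul_pow_lt {q m : ℕ} {b : ℕ → ℕ} (hb : ∀ j, b j < q) :
    ∑ j ∈ range m, b j * q ^ j < q ^ m := by
  induction m with
  | zero => simp
  | succ m ih =>
    rw [sum_range_succ, pow_succ]
    calc _ < q ^ m + b m * q ^ m := by omega
      _ = (b m + 1) * q ^ m := by ring
      _ ≤ q ^ m * q := by rw [mul_comm]; exact Nat.mul_le_mul_left _ (hb m)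

lemma sum_div_pow_mod_mul_pow (q d m : ℕ) :
    ∑ j ∈ range m, d / q ^ j % q * q ^ j = d % q ^ m := by
  induction m with
  | zero => simp [Nat.mod_one]
  | succ m ih => rw [sum_range_succ, ih, Nat.mod_pow_succ, mul_comm]

lemma sum_range_comp_succ_of_eq {M : Type*} [AddCommMonoid M] {F : ℕ → M} {m : ℕ}
    (h : F m = F 0) : ∑ i ∈ range m, F (i + 1) = ∑ i ∈ range m, F i := by
  cases m with
  | zero => simp
  | succ m => rw [sum_range_succ, h, sum_range_succ' F m]

lemma sum_range_mul_filter_dvd {M : Type*} [AddCommMonoid M] (g : ℕ → M) {t : ℕ} (ht : 0 < t)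
    (s : ℕ) : ∑ i ∈ range (t * s) with t ∣ i, g i = ∑ j ∈ range s, g (t * j) := by
  rw [← sum_image fun x _ y _ h => Nat.eq_of_mul_eq_mul_left ht h]
  congr 1
  ext i
  simp only [mem_filter, mem_range, mem_image]
  constructor
  · rintro ⟨hi, j, rfl⟩
    exact ⟨j, Nat.lt_of_mul_lt_mul_left hi, rfl⟩
  · rintro ⟨j, hj, rfl⟩
    exact ⟨Nat.mul_lt_mul_of_pos_left hj ht, dvd_mul_right t j⟩

lemma pow_pow_mul_eq_self {M : Type*} [Monoid M] {w : M} {Q t : ℕ} (hw : w ^ Q ^ t = w)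
    (j : ℕ) : w ^ Q ^ (t * j) = w := by
  induction j with
  | zero => simp
  | succ j ih => rw [mul_add, mul_one, pow_add, pow_mul, ih, hw]

section shiftExp

variable {q n : ℕ} {a : ℕ → ℕ}

lemma shiftExp_zero (a : ℕ → ℕ) : shiftExp q n a 0 = ∑ j ∈ range n, a j * q ^ j := by
  refine sum_congr rfl fun j hj => ?_
  rw [Nat.sub_zero, Nat.add_mod_right, Nat.mod_eq_of_lt (mem_range.1 hj)]

lemma shiftExp_self (a : ℕ → ℕ) : shiftExp q n a n = shiftExp q n a 0 := by
  refine sum_congr rfl fun j _ => ?_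
  rw [Nat.add_sub_cancel, Nat.sub_zero, Nat.add_mod_right]

lemma shiftExp_digits_zero {d : ℕ} (hd : d < q ^ n) :
    shiftExp q n (fun j => d / q ^ j % q) 0 = d := by
  rw [shiftExp_zero, sum_div_pow_mod_mul_pow, Nat.mod_eq_of_lt hd]

lemma exists_shiftExp_eq_and_shiftExp_succ_eq (ha : ∀ j, a j < q) {i : ℕ} (hi : i < n) :
    ∃ L < q ^ (n - 1), shiftExp q n a i = L + a (n - 1 - i) * q ^ (n - 1) ∧
      shiftExp q n a (i + 1) = q * L + a (n - 1 - i) := by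
  obtain ⟨m, rfl⟩ : ∃ m, n = m + 1 := ⟨n - 1, by omega⟩
  simp only [Nat.add_sub_cancel]
  refine ⟨∑ j ∈ range m, a ((j + (m + 1) - i) % (m + 1)) * q ^ j, sum_mul_pow_lt fun _ => ha _,
    ?_, ?_⟩
  · rw [shiftExp, sum_range_succ, show m + (m + 1) - i = m - i + (m + 1) by omega,
      Nat.add_mod_right, Nat.mod_eq_of_lt (by omega)]
  · rw [shiftExp, sum_range_succ', mul_sum, show 0 + (m + 1) - (i + 1) = m - i by omega,
      Nat.mod_eq_of_lt (by omega), pow_zero, mul_one]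
    congr 1
    refine sum_congr rfl fun j _ => ?_
    rw [show j + 1 + (m + 1) - (i + 1) = j + (m + 1) - i by omega, pow_succ]
    ring

lemma shiftExp_succ_eq_digitRotate (ha : ∀ j, a j < q) {i : ℕ} (hi : i < n) :
    shiftExp q n a (i + 1) = digitRotate q n (shiftExp q n a i) := by
  obtain ⟨L, hL, hi, hsucc⟩ := exists_shiftExp_eq_and_shiftExp_succ_eq ha hi
  rw [hsucc, hi, digitRotate, Nat.add_mul_mod_self_right, Nat.mod_eq_of_lt hL,
    Nat.add_mul_div_right _ _ (pos_of_gt hL), Nat.div_eq_of_lt hL, zero_add]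

lemma shiftExp_div_pow (ha : ∀ j, a j < q) {i : ℕ} (hi : i < n) :
    shiftExp q n a i / q ^ (n - 1) = a (n - 1 - i) := by
  obtain ⟨L, hL, hi, -⟩ := exists_shiftExp_eq_and_shiftExp_succ_eq ha hi
  rw [hi, Nat.add_mul_div_right _ _ (pos_of_gt hL), Nat.div_eq_of_lt hL, zero_add]

lemma shiftExp_sub_mod (ha : ∀ j, a j < q) {j : ℕ} (hj : j < n) :
    shiftExp q n a (n - j) % q = a j := by
  obtain ⟨L, -, -, hsucc⟩ :=
    exists_shiftExp_eq_and_shiftExp_succ_eq ha (show n - 1 - j < n by omega)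
  rw [show n - j = n - 1 - j + 1 by omega, hsucc, show n - 1 - (n - 1 - j) = j by omega,
    Nat.mul_add_mod, Nat.mod_eq_of_lt (ha j)]

lemma shiftExp_eq_iterate_digitRotate (ha : ∀ j, a j < q) {i : ℕ} (hi : i ≤ n) :
    shiftExp q n a i = (digitRotate q n)^[i] (shiftExp q n a 0) := by
  induction i with
  | zero => rfl
  | succ i ih =>
    rw [iterate_succ_apply', ← ih (by omega), shiftExp_succ_eq_digitRotate ha (by omega)]

end shiftExp

lemma div_pow_pred_le_one {q n k : ℕ} (hq : 1 < q) (hk : (q - 1) * k < q ^ n) :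
    k / q ^ (n - 1) ≤ 1 := by
  rcases Nat.eq_zero_or_pos n with rfl | hn
  · simp at hk ⊢; omega
  have hpow : q ^ n = q * q ^ (n - 1) := by rw [← pow_succ', Nat.sub_add_cancel hn]
  rw [← Nat.lt_succ_iff, Nat.div_lt_iff_lt_mul (by positivity)]
  by_contra h
  have := Nat.mul_le_mul_left (q - 1) (not_lt.1 h)
  have : q ≤ (q - 1) * 2 := by omega
  nlinarith

lemma C_mul_X_pow_pow_eq {R : Type*} [CommRing R] {q n k : ℕ} (hq : (q : R) = 0) (hn : n ≠ 0)
    (hk : k / q ^ (n - 1) ≤ 1) (β : R) :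
    (C β * X ^ k) ^ q = C (β ^ q) * X ^ digitRotate q n k +
      (X ^ q ^ n - X) * derivative (C (β ^ q) * X ^ digitRotate q n k) := by
  have key := mul_add_div_eq_digitRotate_add (q := q) hn k
  have hcast : (digitRotate q n k : R) = (k / q ^ (n - 1) : ℕ) := by simp [digitRotate, hq]
  rw [mul_pow, ← C_pow, ← pow_mul, derivative_C_mul_X_pow, hcast]
  interval_cases hb : k / q ^ (n - 1)
  · rw [add_zero, zero_mul, add_zero] at key
    simp [mul_comm k q, key]
  · obtain ⟨r, hr⟩ : ∃ r, digitRotate q n k = r + 1 := ⟨_, by rw [digitRotate, hb]⟩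
    rw [hr, Nat.add_sub_cancel, show k * q = r + q ^ n by linarith, Nat.cast_one, mul_one]
    ring

lemma coeff_X_mul_derivative {R : Type*} [CommSemiring R] (f : R[X]) (m : ℕ) :
    (X * derivative f).coeff m = m * f.coeff m := by
  cases m with
  | zero => simp
  | succ m => rw [coeff_X_mul, coeff_derivative]; push_cast; ring

section Solutions

variable {K : Type*} [Field K] {q n : ℕ}

lemma coeff_Hpoly (α : K) (a : ℕ → ℕ) (m : ℕ) :
    (Hpoly q n α a).coeff m = ∑ i ∈ range n with shiftExp q n a i = m, α ^ q ^ i := by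
  rw [Hpoly, finsetSum_coeff, sum_filter]
  exact sum_congr rfl fun i _ => by rw [coeff_C_mul_X_pow]; exact if_congr eq_comm rfl rfl

def IsFrobDerivSolution (q n : ℕ) (f : K[X]) : Prop :=
  f ^ q - f = (X ^ q ^ n - X) * derivative f

lemma IsFrobDerivSolution.coeff_pow_sub {f : K[X]} (hf : IsFrobDerivSolution q n f) (m : ℕ) :
    (f ^ q).coeff m - f.coeff m = (X ^ q ^ n * derivative f).coeff m - m * f.coeff m := by
  rw [← coeff_sub, hf, sub_mul, coeff_sub, coeff_X_mul_derivative]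

lemma IsFrobDerivSolution.sub_one_mul_natDegree_lt (hq : 1 < q) {f : K[X]}
    (hf : IsFrobDerivSolution q n f) : (q - 1) * f.natDegree < q ^ n := by
  set d := f.natDegree
  rcases Nat.eq_zero_or_pos d with hd | hd
  · rw [hd, mul_zero]; positivity
  have hlhs : (f ^ q - f).natDegree = q * d := by
    rw [natDegree_sub_eq_left_of_natDegree_lt] <;> rw [natDegree_pow]
    nlinarith
  have hrhs : ((X ^ q ^ n - X) * derivative f).natDegree ≤ q ^ n + (d - 1) :=
    natDegree_mul_le.trans <| add_le_add
      ((natDegree_sub_le _ _).trans <| max_le (natDegree_X_pow_le _)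
        (natDegree_X_le.trans (Nat.one_le_pow _ _ (by omega : 0 < q))))
      (natDegree_derivative_le f)
  rw [← hf, hlhs] at hrhs
  have : d ≤ q * d := Nat.le_mul_of_pos_left d (by omega)
  rw [Nat.sub_one_mul]
  omega

lemma IsFrobDerivSolution.natDegree_lt (hq : 1 < q) {f : K[X]} (hf : IsFrobDerivSolution q n f) :
    f.natDegree < q ^ n :=
  (Nat.le_mul_of_pos_left _ (by omega)).trans_lt (hf.sub_one_mul_natDegree_lt hq)

lemma IsFrobDerivSolution.coeff_eq_zero_of_le (hq : 1 < q) {f : K[X]}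
    (hf : IsFrobDerivSolution q n f) {m : ℕ} (hm : q ^ n ≤ m) : f.coeff m = 0 :=
  coeff_eq_zero_of_natDegree_lt ((hf.natDegree_lt hq).trans_le hm)

variable {p e : ℕ} [Fact p.Prime] [CharP K p]

lemma coeff_pow_char_pow_mul (hq : q = p ^ e) (f : K[X]) (k : ℕ) :
    (f ^ q).coeff (q * k) = f.coeff k ^ q := by
  subst hq
  rw [← map_iterateFrobenius_expand, coeff_map, mul_comm,
    coeff_expand_mul (pow_pos (Fact.out : p.Prime).pos e), iterateFrobenius_def]

lemma coeff_pow_char_pow_of_not_dvd (hq : q = p ^ e) (f : K[X]) {m : ℕ} (hm : ¬ q ∣ m) :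
    (f ^ q).coeff m = 0 := by
  subst hq
  rw [← map_iterateFrobenius_expand, coeff_map, coeff_expand (pow_pos (Fact.out : p.Prime).pos e),
    if_neg hm, map_zero]

lemma IsFrobDerivSolution.sub (hq : q = p ^ e) {f g : K[X]} (hf : IsFrobDerivSolution q n f)
    (hg : IsFrobDerivSolution q n g) : IsFrobDerivSolution q n (f - g) := by
  unfold IsFrobDerivSolution at *
  subst hq
  rw [sub_pow_char_pow, derivative_sub, mul_sub]
  linear_combination hf - hg

lemma isFrobDerivSolution_sum (hq : q = p ^ e) {ι : Type*} (s : Finset ι) {g : ι → K[X]}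
    (hg : ∀ i ∈ s, IsFrobDerivSolution q n (g i)) : IsFrobDerivSolution q n (∑ i ∈ s, g i) := by
  subst hq
  rw [IsFrobDerivSolution, sum_pow_char_pow, derivative_sum, mul_sum, ← sum_sub_distrib]
  exact sum_congr rfl hg

/-- Each term `α^{q^i} X^{k^{(i)}}` of `H_{α,k}`, raised to the `q`-th power, is the next term
plus `(X^{q^n} - X)` times the derivative of the next term; summing over the cycle of shifts
gives the equation. -/
lemma isFrobDerivSolution_Hpoly (hq : q = p ^ e) (he : e ≠ 0) (hn : n ≠ 0) {α : K}
    (hα : α ^ q ^ n = α) {a : ℕ → ℕ} (ha : ∀ j, a j ≤ 1) :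
    IsFrobDerivSolution q n (Hpoly q n α a) := by
  have hq1 : 1 < q := hq ▸ Nat.one_lt_pow he (Fact.out : p.Prime).one_lt
  have ha' : ∀ j, a j < q := fun j => (ha j).trans_lt hq1
  have hq0 : (q : K) = 0 := (CharP.cast_eq_zero_iff K p q).2 (hq ▸ dvd_pow_self p he)
  set g : ℕ → K[X] := fun i => C (α ^ q ^ i) * X ^ shiftExp q n a i with hg
  have hg_pow : ∀ i ∈ range n,
      g i ^ q = g (i + 1) + (X ^ q ^ n - X) * derivative (g (i + 1)) := fun i hi => by
    have hi := mem_range.1 hi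
    rw [hg, C_mul_X_pow_pow_eq hq0 hn (by rw [shiftExp_div_pow ha' hi]; exact ha _),
      ← shiftExp_succ_eq_digitRotate ha' hi, ← pow_mul, ← pow_succ]
  have hg_n : g n = g 0 := by simp only [hg, shiftExp_self, hα, pow_zero, pow_one]
  have hpow : (∑ i ∈ range n, g i) ^ q = ∑ i ∈ range n, g i ^ q := by
    subst hq; exact sum_pow_char_pow ..
  rw [IsFrobDerivSolution, Hpoly, hpow, sum_congr rfl hg_pow, sum_add_distrib, ← mul_sum,
    sum_range_comp_succ_of_eq hg_n,
    sum_range_comp_succ_of_eq (F := fun i => derivative (g i)) (by rw [hg_n]), derivative_sum]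
  ring

/-- Compare the coefficients of `X^{qk}`: when the top digit of `k` is `1`, `qk = (ρ k - 1) + q^n`
and the term `c_{ρ k} X^{ρ k}` reaches `X^{qk}` through `X^{q^n} f'`. -/
lemma IsFrobDerivSolution.coeff_digitRotate (hq : q = p ^ e) (he : e ≠ 0) (hn : n ≠ 0)
    {f : K[X]} (hf : IsFrobDerivSolution q n f) {k : ℕ} (hk : (q - 1) * k < q ^ n) :
    f.coeff (digitRotate q n k) = f.coeff k ^ q := by
  have hq1 : 1 < q := hq ▸ Nat.one_lt_pow he (Fact.out : p.Prime).one_lt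
  have hq0 : (q : K) = 0 := (CharP.cast_eq_zero_iff K p q).2 (hq ▸ dvd_pow_self p he)
  have key := mul_add_div_eq_digitRotate_add (q := q) hn k
  have hcoeff := hf.coeff_pow_sub (q * k)
  rw [coeff_pow_char_pow_mul hq] at hcoeff
  have hb1 := div_pow_pred_le_one hq1 hk
  interval_cases hb : k / q ^ (n - 1)
  · rw [add_zero, zero_mul, add_zero] at key
    have hlt : q * k < q ^ n := by
      have hk' : k < q ^ (n - 1) := (Nat.div_eq_zero_iff.1 hb).resolve_left (by positivity)
      calc q * k < q * q ^ (n - 1) := Nat.mul_lt_mul_of_pos_left hk' (by omega)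
        _ = q ^ n := by rw [← pow_succ', Nat.sub_add_cancel (Nat.one_le_iff_ne_zero.2 hn)]
    rw [coeff_X_pow_mul', if_neg (not_le.2 hlt), Nat.cast_mul, hq0, zero_mul, zero_mul] at hcoeff
    rw [← key]
    linear_combination -hcoeff
  · set r := q * (k % q ^ (n - 1)) with hrdef
    have hr : digitRotate q n k = r + 1 := by rw [digitRotate, hb]
    have hr0 : (r : K) = 0 := by simp [hrdef, hq0]
    rw [show q * k = r + q ^ n by omega, coeff_X_pow_mul, coeff_derivative,
      hf.coeff_eq_zero_of_le hq1 le_add_self, hr0, zero_add, mul_one, mul_zero] at hcoeff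
    rw [hr]
    linear_combination -hcoeff

/-- Comparing coefficients at `k` and at `k - 1 + q ^ n` gives `(k - 1) c_k = 0` and
`k c_k = 0`. -/
lemma IsFrobDerivSolution.coeff_eq_zero_of_two_le_mod (hq : q = p ^ e) (he : e ≠ 0) (hn : n ≠ 0)
    {f : K[X]} (hf : IsFrobDerivSolution q n f) {k : ℕ} (hk : k < q ^ n) (h2 : 2 ≤ k % q) :
    f.coeff k = 0 := by
  have hq1 : 1 < q := hq ▸ Nat.one_lt_pow he (Fact.out : p.Prime).one_lt
  obtain ⟨j, rfl⟩ : ∃ j, k = j + 1 := Nat.exists_eq_succ_of_ne_zero (by rintro rfl; simp at h2)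
  have hndvd_k : ¬ q ∣ j + 1 := fun h => by rw [Nat.mod_eq_zero_of_dvd h] at h2; omega
  have hndvd_j : ¬ q ∣ j + q ^ n := fun h => by
    rw [Nat.add_mod, Nat.mod_eq_zero_of_dvd ((Nat.dvd_add_left (dvd_pow_self q hn)).1 h),
      zero_add, Nat.mod_mod, Nat.mod_eq_of_lt hq1] at h2
    omega
  have hk := hf.coeff_pow_sub (j + 1)
  rw [coeff_pow_char_pow_of_not_dvd hq f hndvd_k, coeff_X_pow_mul', if_neg (by omega)] at hk
  have hj := hf.coeff_pow_sub (j + q ^ n)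
  rw [coeff_pow_char_pow_of_not_dvd hq f hndvd_j, coeff_X_pow_mul, coeff_derivative,
    hf.coeff_eq_zero_of_le hq1 le_add_self] at hj
  push_cast at hk hj
  linear_combination -hj - hk

lemma IsFrobDerivSolution.coeff_iterate_digitRotate (hq : q = p ^ e) (he : e ≠ 0) (hn : n ≠ 0)
    {f : K[X]} (hf : IsFrobDerivSolution q n f) {k : ℕ} (hk : f.coeff k ≠ 0) (i : ℕ) :
    f.coeff ((digitRotate q n)^[i] k) = f.coeff k ^ q ^ i := by
  have hq1 : 1 < q := hq ▸ Nat.one_lt_pow he (Fact.out : p.Prime).one_lt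
  induction i with
  | zero => simp
  | succ i ih =>
    have hne : f.coeff ((digitRotate q n)^[i] k) ≠ 0 := ih ▸ pow_ne_zero _ hk
    rw [iterate_succ_apply', hf.coeff_digitRotate hq he hn ((Nat.mul_le_mul_left _
      (le_natDegree_of_ne_zero hne)).trans_lt (hf.sub_one_mul_natDegree_lt hq1)), ih, ← pow_mul,
      ← pow_succ]

/-- Rotating the digits of `d` brings each of them to the units place without leaving the
support of `f`. -/
lemma IsFrobDerivSolution.div_pow_mod_le_one (hq : q = p ^ e) (he : e ≠ 0) (hn : n ≠ 0)
    {f : K[X]} (hf : IsFrobDerivSolution q n f) {d : ℕ} (hd : f.coeff d ≠ 0) (j : ℕ) :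
    d / q ^ j % q ≤ 1 := by
  have hq1 : 1 < q := hq ▸ Nat.one_lt_pow he (Fact.out : p.Prime).one_lt
  have hdlt : d < q ^ n := (le_natDegree_of_ne_zero hd).trans_lt (hf.natDegree_lt hq1)
  rcases lt_or_ge j n with hj | hj
  · set a : ℕ → ℕ := fun j => d / q ^ j % q
    have ha : ∀ j, a j < q := fun j => Nat.mod_lt _ (by omega)
    have hne : f.coeff (shiftExp q n a (n - j)) ≠ 0 := by
      rw [shiftExp_eq_iterate_digitRotate ha (Nat.sub_le n j), shiftExp_digits_zero hdlt,
        hf.coeff_iterate_digitRotate hq he hn hd]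
      exact pow_ne_zero _ hd
    have hlt := (le_natDegree_of_ne_zero hne).trans_lt (hf.natDegree_lt hq1)
    change a j ≤ 1
    by_contra h
    exact hne (hf.coeff_eq_zero_of_two_le_mod hq he hn hlt (by rw [shiftExp_sub_mod ha hj]; omega))
  · rw [Nat.div_eq_of_lt (hdlt.trans_le (Nat.pow_le_pow_right (by omega) hj)), Nat.zero_mod]
    exact zero_le_one

variable [Fintype K]

/-- The polynomial `Σ_j X^{q^{tj}}` is nonzero of degree `< |K|`, so it takes some value `T ≠ 0`;
`T` is fixed by `x ↦ x^{q^t}`, hence so is `c / T`, and `α = (c / T) z` works. -/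
lemma exists_sum_pow_pow_mul_eq (hq : q = p ^ e) (hn : n ≠ 0) (hK : Fintype.card K = q ^ n)
    {t : ℕ} (ht : 0 < t) (htn : t ∣ n) {c : K} (hc : c ^ q ^ t = c) :
    ∃ α : K, ∑ j ∈ range (n / t), α ^ q ^ (t * j) = c := by
  have hq1 : 1 < q := (one_lt_pow_iff hn).1 (hK ▸ Fintype.one_lt_card)
  obtain ⟨s, rfl⟩ := htn
  rw [Nat.mul_div_cancel_left s ht]
  have hs : 0 < s := Nat.pos_of_ne_zero (right_ne_zero_of_mul hn)
  set P : K[X] := ∑ j ∈ range s, X ^ q ^ (t * j)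
  have hP : P.coeff 1 = 1 := by
    rw [finsetSum_coeff, sum_eq_single 0 (fun j _ hj => ?_) (by simp [hs])]
    · simp
    · rw [coeff_X_pow, if_neg]
      rw [eq_comm, Nat.pow_eq_one, not_or]
      exact ⟨hq1.ne', Nat.mul_ne_zero ht.ne' hj⟩
  have hPdeg : P.natDegree < Fintype.card K := by
    rw [hK]
    refine (natDegree_sum_le_of_forall_le _ _ (n := q ^ (t * (s - 1))) fun j hj => ?_).trans_lt ?_
    · rw [natDegree_X_pow]
      exact Nat.pow_le_pow_right (by omega) (Nat.mul_le_mul_left t (by simp at hj; omega))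
    · exact Nat.pow_lt_pow_right hq1 (Nat.mul_lt_mul_of_pos_left (by omega) ht)
  obtain ⟨z, hz⟩ := P.exists_eval_ne_zero_of_natDegree_lt_card (fun h => by simp [h] at hP)
    (by rw [Cardinal.mk_fintype]; exact_mod_cast hPdeg)
  have hT : P.eval z = ∑ j ∈ range s, z ^ q ^ (t * j) := by simp [P, eval_finsetSum]
  rw [hT] at hz
  set T := ∑ j ∈ range s, z ^ q ^ (t * j)
  have hTfix : T ^ q ^ t = T := by
    have hpow : T ^ q ^ t = ∑ j ∈ range s, (z ^ q ^ (t * j)) ^ q ^ t := by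
      rw [show q ^ t = p ^ (e * t) by rw [hq, pow_mul]]
      exact sum_pow_char_pow p (e * t) _ _
    rw [hpow]
    refine (sum_congr rfl fun j _ => ?_).trans
      (sum_range_comp_succ_of_eq (F := fun j => z ^ q ^ (t * j)) ?_)
    · rw [← pow_mul, ← pow_add, mul_add, mul_one]
    · simp only [mul_zero, pow_zero, pow_one]
      rw [← hK, FiniteField.pow_card]
  refine ⟨c / T * z, ?_⟩
  have hw : (c / T) ^ q ^ t = c / T := by rw [div_pow, hc, hTfix]
  calc ∑ j ∈ range s, (c / T * z) ^ q ^ (t * j) = c / T * T := by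
        rw [mul_sum]
        exact sum_congr rfl fun j _ => by rw [mul_pow, pow_pow_mul_eq_self hw]
    _ = c := div_mul_cancel₀ c hz

/-- The shifts `k^{(i)}` equal to `k` are those with `i` a multiple of the period `t` of `k` under
digit rotation, so the coefficient of `X^k` in `H_{α,k}` is `Σ_{j < n/t} α^{q^{tj}}`. -/
lemma exists_coeff_Hpoly_eq (hq : q = p ^ e) (hn : n ≠ 0) (hK : Fintype.card K = q ^ n)
    {a : ℕ → ℕ} (ha : ∀ j, a j < q) {c : K}
    (hc : ∀ i, (digitRotate q n)^[i] (shiftExp q n a 0) = shiftExp q n a 0 → c ^ q ^ i = c) :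
    ∃ α : K, (Hpoly q n α a).coeff (shiftExp q n a 0) = c := by
  set d := shiftExp q n a 0
  have hper : IsPeriodicPt (digitRotate q n) n d :=
    (shiftExp_eq_iterate_digitRotate ha le_rfl).symm.trans (shiftExp_self a)
  have ht := hper.minimalPeriod_pos (Nat.pos_of_ne_zero hn)
  have htn := hper.minimalPeriod_dvd
  obtain ⟨α, hα⟩ := exists_sum_pow_pow_mul_eq hq hn hK ht htn (hc _ iterate_minimalPeriod)
  refine ⟨α, ?_⟩
  rw [coeff_Hpoly, ← hα, ← sum_range_mul_filter_dvd (fun i => α ^ q ^ i) ht,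
    Nat.mul_div_cancel' htn]
  refine sum_congr (filter_congr fun i hi => ?_) fun _ _ => rfl
  rw [shiftExp_eq_iterate_digitRotate ha (mem_range.1 hi).le, ← isPeriodicPt_iff_minimalPeriod_dvd]
  rfl

lemma IsFrobDerivSolution.exists_degree_sub_Hpoly_lt (hq : q = p ^ e) (he : e ≠ 0) (hn : n ≠ 0)
    (hK : Fintype.card K = q ^ n) {f : K[X]} (hf : IsFrobDerivSolution q n f) (hf0 : f ≠ 0) :
    ∃ (α : K) (a : ℕ → ℕ), (∀ j, a j ≤ 1) ∧ (f - Hpoly q n α a).degree < f.degree := by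
  have hq1 : 1 < q := hq ▸ Nat.one_lt_pow he (Fact.out : p.Prime).one_lt
  set d := f.natDegree
  set a : ℕ → ℕ := fun j => d / q ^ j % q
  have ha : ∀ j, a j < q := fun j => Nat.mod_lt _ (by omega)
  have hd : shiftExp q n a 0 = d := shiftExp_digits_zero (hf.natDegree_lt hq1)
  have hlead : f.coeff d ≠ 0 := leadingCoeff_ne_zero.2 hf0
  have hrot := hf.coeff_iterate_digitRotate hq he hn hlead
  obtain ⟨α, hα⟩ := exists_coeff_Hpoly_eq hq hn hK ha (c := f.coeff d) fun i hi => by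
    rw [hd] at hi; rw [← hrot i, hi]
  refine ⟨α, a, hf.div_pow_mod_le_one hq he hn hlead, ?_⟩
  rw [degree_eq_natDegree hf0, degree_lt_iff_coeff_zero]
  intro m hm
  rcases hm.eq_or_lt with rfl | hlt
  · rw [coeff_sub, ← hα, hd, sub_self]
  · rw [coeff_sub, coeff_eq_zero_of_natDegree_lt hlt, coeff_Hpoly, filter_false_of_mem, sum_empty,
      sub_zero]
    intro i hi hshift
    have hne : f.coeff (shiftExp q n a i) ≠ 0 := by
      rw [shiftExp_eq_iterate_digitRotate ha (mem_range.1 hi).le, hd, hrot]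
      exact pow_ne_zero _ hlead
    exact hne (coeff_eq_zero_of_natDegree_lt (hshift ▸ hlt))

lemma IsFrobDerivSolution.exists_eq_sum_Hpoly (hq : q = p ^ e) (he : e ≠ 0) (hn : n ≠ 0)
    (hK : Fintype.card K = q ^ n) {f : K[X]} (hf : IsFrobDerivSolution q n f) :
    ∃ (m : ℕ) (α : ℕ → K) (a : ℕ → ℕ → ℕ), (∀ t j, a t j ≤ 1) ∧
      f = ∑ t ∈ range m, Hpoly q n (α t) (a t) := by
  induction f using degree_lt_wf.induction with
  | _ f ih =>
    rcases eq_or_ne f 0 with rfl | hf0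
    · exact ⟨0, 0, 0, fun _ _ => zero_le_one, by simp⟩
    obtain ⟨α₀, a₀, ha₀, hlt⟩ := hf.exists_degree_sub_Hpoly_lt hq he hn hK hf0
    have hα₀ : α₀ ^ q ^ n = α₀ := hK ▸ FiniteField.pow_card α₀
    obtain ⟨m, α, a, ha, hsum⟩ :=
      ih _ hlt (hf.sub hq (isFrobDerivSolution_Hpoly hq he hn hα₀ ha₀))
    refine ⟨m + 1, update α m α₀, update a m a₀, fun t j => ?_, ?_⟩
    · rcases eq_or_ne t m with rfl | h
      · simpa using ha₀ j
      · simpa [h] using ha t j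
    · rw [sum_range_succ, update_self, update_self, ← sub_eq_iff_eq_add, hsum]
      exact sum_congr rfl fun t ht => by
        rw [update_of_ne (mem_range.1 ht).ne, update_of_ne (mem_range.1 ht).ne]

end Solutions

/-- Let `K` have `q^n` elements. A polynomial `f ∈ K[X]` satisfies
`f^q − f = (X^{q^n} − X)·f'` iff `f` is a finite sum of polynomials `H_{α,k}` where
`k` has all base-`q` digits in `{0,1}`. -/
theorem stmt12 (q n : ℕ) (hq : IsPrimePow q) (hn : 1 ≤ n)
    {K : Type*} [Field K] [Fintype K] (hK : Fintype.card K = q ^ n)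
    (f : K[X]) :
    f ^ q - f = (X ^ q ^ n - X) * f.derivative ↔
      ∃ (m : ℕ) (α : ℕ → K) (a : ℕ → ℕ → ℕ),
        (∀ t j, a t j ≤ 1) ∧
        f = ∑ t ∈ Finset.range m, Hpoly q n (α t) (a t) := by
  obtain ⟨p, e, hp, he, hq⟩ := hq
  have : Fact p.Prime := ⟨hp.nat_prime⟩
  have : CharP K p := charP_of_card_eq_prime_pow (f := e * n) (by rw [hK, ← hq, pow_mul])
  have hn : n ≠ 0 := Nat.one_le_iff_ne_zero.1 hn
  refine ⟨fun hf => IsFrobDerivSolution.exists_eq_sum_Hpoly hq.symm he.ne' hn hK hf, ?_⟩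
  rintro ⟨m, α, a, ha, rfl⟩
  exact isFrobDerivSolution_sum hq.symm _ fun t _ =>
    isFrobDerivSolution_Hpoly hq.symm he.ne' hn (hK ▸ FiniteField.pow_card (α t)) (ha t)
end

section
/- Let K be a finite field with q^n elements (q a power of the prime p), and let A, L, M ∈ K[X] be q-additive polynomials such that A and L each satisfy (*) and L = γ·(A∘M) for some nonzero γ ∈ K. Then for every f ∈ W(L|K) one has M∘f ∈ W(A|K); moreover, for f ∈ W(L|K), M∘f = 0 if and only if f is a constant polynomial c with M(c) = 0. -/
open Polynomial


private lemma addDeriv {q : ℕ} {K : Type*} [Field K] (hq0 : (q : K) = 0) (m : ℕ) (ω : ℕ → K) :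
    derivative (∑ i ∈ Finset.range (m + 1), C (ω i) * X ^ q ^ i) = C (ω 0) := by
  rw [derivative_sum, Finset.sum_eq_single 0]
  · simp
  · intro i hi h0
    rw [derivative_C_mul_X_pow]
    have : ((q : K)) ^ i = 0 := by rw [hq0]; exact zero_pow h0
    push_cast
    rw [this]; simp
  · simp

private lemma qZero (q n : ℕ) (hq : IsPrimePow q) (hn : 1 ≤ n)
    {K : Type*} [Field K] [Fintype K] (hK : Fintype.card K = q ^ n) : (q : K) = 0 := by
  obtain ⟨p, k, hp, hk, rfl⟩ := hq
  have hp' : p.Prime := hp.nat_prime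
  obtain ⟨p', hc⟩ := CharP.exists K
  haveI := hc
  obtain ⟨m, hp'', hm⟩ := FiniteField.card K p'
  rw [hK, ← pow_mul] at hm
  have hdvd : p ∣ p' ^ (m : ℕ) := hm ▸ dvd_pow_self p (by positivity)
  have hpp' : p = p' := (Nat.prime_dvd_prime_iff_eq hp' hp'').mp (hp'.dvd_of_dvd_pow hdvd)
  have h0 : (p : K) = 0 := hpp' ▸ CharP.cast_eq_zero K p'
  push_cast
  rw [h0]
  exact zero_pow (by omega)

/-- Let `K` have `q^n` elements and let `A, L, M` be `q`-additive
polynomials with `A, L` satisfying (*) and `L = γ·(A∘M)` for some `γ ≠ 0`. Then for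
every `f ∈ W(L|K)` one has `M∘f ∈ W(A|K)`; moreover `M∘f = 0` iff `f` is a constant
`c` with `M(c) = 0`. -/
theorem stmt15 (q n : ℕ) (hq : IsPrimePow q) (hn : 1 ≤ n)
    {K : Type*} [Field K] [Fintype K] (hK : Fintype.card K = q ^ n)
    (A L M : K[X])
    (hAq : ∃ (m : ℕ) (ω : ℕ → K),
      A = ∑ i ∈ Finset.range (m + 1), C (ω i) * X ^ q ^ i)
    (hLq : ∃ (m : ℕ) (ω : ℕ → K),
      L = ∑ i ∈ Finset.range (m + 1), C (ω i) * X ^ q ^ i)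
    (hMq : ∃ (m : ℕ) (ω : ℕ → K),
      M = ∑ i ∈ Finset.range (m + 1), C (ω i) * X ^ q ^ i)
    (hAstar : A.Monic ∧ 2 < A.natDegree ∧
      Multiset.card A.roots = A.natDegree ∧ A.roots.Nodup)
    (hLstar : L.Monic ∧ 2 < L.natDegree ∧
      Multiset.card L.roots = L.natDegree ∧ L.roots.Nodup)
    (γ : K) (hγ : γ ≠ 0) (hLAM : L = C γ * A.comp M)
    (f : K[X])
    (hf : ∃ θ : K, θ ≠ 0 ∧ L.comp f = C θ * ((X ^ q ^ n - X) * f.derivative)) :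
    (∃ θ : K, θ ≠ 0 ∧
      A.comp (M.comp f) = C θ * ((X ^ q ^ n - X) * (M.comp f).derivative)) ∧
    (M.comp f = 0 ↔ ∃ c : K, f = C c ∧ M.eval c = 0) := by
  obtain ⟨θ, hθ, hfeq⟩ := hf
  have hq0 : (q : K) = 0 := qZero q n hq hn hK
  obtain ⟨mA, α, hA⟩ := hAq
  obtain ⟨mL, lam, hL⟩ := hLq
  obtain ⟨mM, μ, hM⟩ := hMq
  have hA' : derivative A = C (α 0) := by rw [hA]; exact addDeriv hq0 _ _
  have hL' : derivative L = C (lam 0) := by rw [hL]; exact addDeriv hq0 _ _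
  have hM' : derivative M = C (μ 0) := by rw [hM]; exact addDeriv hq0 _ _
  obtain ⟨hLmon, hLdeg, hLcard, hLnodup⟩ := hLstar
  have hLne : L ≠ 0 := hLmon.ne_zero
  -- L is separable, so its derivative is nonzero
  have hLsep : L.Separable := by
    rw [← nodup_roots_iff_of_splits hLne (splits_iff_card_roots.mpr hLcard)]
    exact hLnodup
  have hL'ne : derivative L ≠ 0 := by
    intro h
    have : IsUnit L := isCoprime_zero_right.mp (h ▸ hLsep)
    have := natDegree_eq_zero_of_isUnit this
    omega
  have hlam0 : lam 0 ≠ 0 := fun h => hL'ne (by rw [hL', h, map_zero])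
  -- derivative relation: C (lam 0) = C γ * (C (α 0) * C (μ 0))
  have hder : C (lam 0) = C γ * (C (α 0) * C (μ 0)) := by
    have := congrArg derivative hLAM
    rw [hL', derivative_C_mul, derivative_comp, hA', hM', C_comp] at this
    rw [this]; ring
  have hμ0 : μ 0 ≠ 0 := by
    intro h
    apply hlam0
    have := hder
    rw [h, map_zero, mul_zero, mul_zero] at this
    exact C_injective (this.trans (map_zero C).symm)
  have hlamval : lam 0 = γ * (α 0 * μ 0) := by
    have := hder
    rw [← map_mul, ← map_mul] at this
    exact C_injective this
  -- derivative of M.comp f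
  have hMf' : derivative (M.comp f) = C (μ 0) * derivative f := by
    rw [derivative_comp, hM', C_comp]; ring
  -- natDegree of M ≥ 1
  have hLcomp : L.natDegree = A.natDegree * M.natDegree := by
    rw [hLAM, natDegree_C_mul hγ, natDegree_comp]
  have hMdeg : 1 ≤ M.natDegree := by
    by_contra h
    push_neg at h
    have h0 : M.natDegree = 0 := by omega
    rw [h0, mul_zero] at hLcomp
    omega
  -- key composition identity
  have hcompA : L.comp f = C γ * A.comp (M.comp f) := by
    rw [hLAM, mul_comp, C_comp, comp_assoc]
  by_cases hf' : derivative f = 0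
  · -- f is constant
    have hLf0 : L.comp f = 0 := by rw [hfeq, hf', mul_zero, mul_zero]
    have hfnd : f.natDegree = 0 := by
      have h1 : (L.comp f).natDegree = 0 := by rw [hLf0]; simp
      rw [natDegree_comp] at h1
      rcases Nat.mul_eq_zero.mp h1 with h | h
      · omega
      · exact h
    obtain ⟨c, rfl⟩ := natDegree_eq_zero.mp hfnd
    have hAMc : A.eval (M.eval c) = 0 := by
      have := hcompA
      rw [hLf0] at this
      have h2 : C γ * A.comp (M.comp (C c)) = 0 := this.symm
      rw [comp_C, comp_C, ← map_mul] at h2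
      have := C_injective (h2.trans (map_zero C).symm)
      exact (mul_eq_zero.mp this).resolve_left hγ
    constructor
    · refine ⟨1, one_ne_zero, ?_⟩
      rw [comp_C, comp_C, hAMc, map_zero, derivative_C]
      simp
    · constructor
      · intro h
        refine ⟨c, rfl, ?_⟩
        rw [comp_C] at h
        exact C_injective (h.trans (map_zero C).symm)
      · rintro ⟨c', hc', hMc'⟩
        rw [hc', comp_C, hMc', map_zero]
  · -- f nonconstant
    have hfnd : 1 ≤ f.natDegree := by
      by_contra h
      push_neg at h
      have h0 : f.natDegree = 0 := by omega
      obtain ⟨c, rfl⟩ := natDegree_eq_zero.mp h0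
      exact hf' derivative_C
    constructor
    · refine ⟨γ⁻¹ * θ * (μ 0)⁻¹,
        mul_ne_zero (mul_ne_zero (inv_ne_zero hγ) hθ) (inv_ne_zero hμ0), ?_⟩
      have hAMf : A.comp (M.comp f) = C γ⁻¹ * L.comp f := by
        rw [hcompA, ← mul_assoc, ← map_mul, inv_mul_cancel₀ hγ, map_one, one_mul]
      rw [hAMf, hfeq, hMf']
      rw [map_mul, map_mul]
      have h1 : C (μ 0)⁻¹ * C (μ 0) = 1 := by
        rw [← map_mul, inv_mul_cancel₀ hμ0, map_one]
      linear_combination (-(C γ⁻¹ * C θ * ((X ^ q ^ n - X) * derivative f))) * h1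
    · have hMfne : M.comp f ≠ 0 := by
        intro h
        have h1 : (M.comp f).natDegree = 0 := by rw [h]; simp
        rw [natDegree_comp] at h1
        rcases Nat.mul_eq_zero.mp h1 with h2 | h2 <;> omega
      constructor
      · intro h; exact absurd h hMfne
      · rintro ⟨c, rfl, _⟩
        exact absurd derivative_C hf'
end

section
/- Let q be a prime power and K a finite field with q^6 elements. Then the polynomial G = X^{q^4+q} − X^{q^3+1} ∈ K[X] is a minimal value set polynomial: its value set V_G = {G(a) : a ∈ K} satisfies |V_G| = ⌊(q^6−1)/(q^4+q)⌋ + 1 = q^2. Moreover V_G is contained in the subfield F_{q^3} of K (i.e. G(a)^{q^3} = G(a) for all a ∈ K), while deg G = q^4 + q > (q^6−1)/(q^3−1). -/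
open Polynomial Finset

lemma stmt19_aux_card_roots {K : Type*} [Field K] [Fintype K] [DecidableEq K] {m : ℕ}
    (hm : 2 ≤ m) (hdvd : m - 1 ∣ Fintype.card K - 1) :
    (Finset.univ.filter fun x : K => x ^ m = x).card = m := by
  have hc2 : 1 < Fintype.card K := Fintype.one_lt_card
  set c := Fintype.card K with hc
  have hmc : m ≤ c := by
    have h1 : m - 1 ≤ c - 1 := Nat.le_of_dvd (by omega) hdvd
    omega
  obtain ⟨t, ht⟩ := hdvd
  have hdvd1 : ((X : K[X]) ^ (m - 1) - 1) ∣ X ^ (c - 1) - 1 := by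
    have h := sub_dvd_pow_sub_pow ((X : K[X]) ^ (m - 1)) 1 t
    rwa [one_pow, ← pow_mul, ← ht] at h
  have hdvdP : ((X : K[X]) ^ m - X) ∣ X ^ c - X := by
    have hm1 : m - 1 + 1 = m := by omega
    have hc1 : c - 1 + 1 = c := by omega
    have e1 : (X : K[X]) ^ m - X = X * (X ^ (m - 1) - 1) := by
      rw [mul_sub, mul_one, ← pow_succ', hm1]
    have e2 : (X : K[X]) ^ c - X = X * (X ^ (c - 1) - 1) := by
      rw [mul_sub, mul_one, ← pow_succ', hc1]
    rw [e1, e2]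
    exact mul_dvd_mul_left _ hdvd1
  obtain ⟨R, hR⟩ := hdvdP
  have hPne : ((X : K[X]) ^ c - X) ≠ 0 := FiniteField.X_pow_card_sub_X_ne_zero K hc2
  have hPmdeg : ((X : K[X]) ^ m - X).natDegree = m :=
    FiniteField.X_pow_card_sub_X_natDegree_eq K (by omega)
  have hPmne : ((X : K[X]) ^ m - X) ≠ 0 := FiniteField.X_pow_card_sub_X_ne_zero K (by omega)
  have hRne : R ≠ 0 := by
    rintro rfl
    rw [mul_zero] at hR
    exact hPne hR
  have hPdeg : ((X : K[X]) ^ c - X).natDegree = c :=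
    FiniteField.X_pow_card_sub_X_natDegree_eq K hc2
  have hdegs : c = m + R.natDegree := by
    rw [← hPdeg, hR, natDegree_mul hPmne hRne, hPmdeg]
  have hroots : ((X : K[X]) ^ c - X).roots = Finset.univ.val :=
    FiniteField.roots_X_pow_card_sub_X K
  have hcardroots : Multiset.card ((X : K[X]) ^ c - X).roots = c := by
    rw [hroots]; exact Finset.card_univ
  have hsplit : ((X : K[X]) ^ c - X).roots
      = ((X : K[X]) ^ m - X).roots + R.roots := by
    rw [hR, roots_mul (hR ▸ hPne)]
  have h1 : Multiset.card ((X : K[X]) ^ m - X).roots ≤ m := by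
    calc Multiset.card ((X : K[X]) ^ m - X).roots ≤ ((X : K[X]) ^ m - X).natDegree :=
        Polynomial.card_roots' _
      _ = m := hPmdeg
  have h2 : Multiset.card R.roots ≤ R.natDegree := Polynomial.card_roots' R
  have hcardm : Multiset.card ((X : K[X]) ^ m - X).roots = m := by
    have := hcardroots
    rw [hsplit, Multiset.card_add] at this
    omega
  have hnodup : ((X : K[X]) ^ m - X).roots.Nodup := by
    apply Multiset.nodup_of_le (le_trans (Multiset.le_add_right _ _) (le_of_eq hsplit.symm))
    rw [hroots]
    exact Finset.univ.nodup
  have hfin : (Finset.univ.filter fun x : K => x ^ m = x)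
      = ((X : K[X]) ^ m - X).roots.toFinset := by
    ext x
    simp [Multiset.mem_toFinset, mem_roots, hPmne, sub_eq_zero]
  rw [hfin, Multiset.toFinset_card_eq_card_iff_nodup.mpr hnodup, hcardm]

lemma stmt19_aux_fiber_le {K : Type*} [Field K] [Fintype K] [DecidableEq K] {n : ℕ}
    (hn : 0 < n) (b : K) :
    (Finset.univ.filter fun a : K => a ^ n = b).card ≤ n := by
  have hne : ((X : K[X]) ^ n - C b) ≠ 0 := X_pow_sub_C_ne_zero hn b
  have hsub : (Finset.univ.filter fun a : K => a ^ n = b)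
      ⊆ ((X : K[X]) ^ n - C b).roots.toFinset := by
    intro a ha
    simp only [Finset.mem_filter] at ha
    simp [Multiset.mem_toFinset, mem_roots, hne, sub_eq_zero, ha.2]
  calc (Finset.univ.filter fun a : K => a ^ n = b).card
      ≤ ((X : K[X]) ^ n - C b).roots.toFinset.card := Finset.card_le_card hsub
    _ ≤ Multiset.card ((X : K[X]) ^ n - C b).roots := Multiset.toFinset_card_le _
    _ ≤ ((X : K[X]) ^ n - C b).natDegree := Polynomial.card_roots' _
    _ = n := natDegree_X_pow_sub_C

/-- Let `K` have `q^6` elements. Then `G = X^{q^4+q} − X^{q^3+1}` is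
a minimal value set polynomial: `|V_G| = ⌊(q^6−1)/(q^4+q)⌋ + 1 = q^2`. Moreover
`V_G ⊆ F_{q^3}`, while `deg G = q^4 + q > (q^6−1)/(q^3−1)`. -/
theorem stmt19 (q : ℕ) (hq : IsPrimePow q)
    {K : Type*} [Field K] [Fintype K] [DecidableEq K]
    (hK : Fintype.card K = q ^ 6)
    (G : K[X]) (hG : G = X ^ (q ^ 4 + q) - X ^ (q ^ 3 + 1)) :
    (Finset.univ.image fun a => G.eval a).card = (q ^ 6 - 1) / G.natDegree + 1 ∧
    (Finset.univ.image fun a => G.eval a).card = q ^ 2 ∧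
    (∀ a : K, G.eval a ^ q ^ 3 = G.eval a) ∧
    G.natDegree = q ^ 4 + q ∧
    (q ^ 6 - 1) / (q ^ 3 - 1) < q ^ 4 + q := by
  classical
  have hq2 : 2 ≤ q := hq.two_le
  -- characteristic setup
  obtain ⟨p, k, hp, hk, hpk⟩ := hq
  have hpp : p.Prime := Nat.prime_iff.mpr hp
  haveI : CharP K (ringChar K) := ringChar.charP K
  have hrp : (ringChar K).Prime := CharP.char_is_prime K (ringChar K)
  haveI := Fact.mk hrp
  obtain ⟨n, -, hn⟩ := FiniteField.card K (ringChar K)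
  have hpr : p = ringChar K := by
    have hd : p ∣ ringChar K ^ (n : ℕ) := by
      rw [← hn, hK, ← hpk, ← pow_mul]
      exact dvd_pow_self p (by positivity)
    exact (Nat.prime_dvd_prime_iff_eq hpp hrp).mp (hpp.dvd_of_dvd_pow hd)
  haveI hcharp : CharP K p := hpr ▸ ringChar.charP K
  haveI := Fact.mk hpp
  -- Frobenius facts
  have frobadd : ∀ (m : ℕ) (x y : K), (x + y) ^ q ^ m = x ^ q ^ m + y ^ q ^ m := by
    intro m x y
    rw [← hpk, ← pow_mul]
    exact add_pow_char_pow x y p (k * m)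
  have frobsub : ∀ (m : ℕ) (x y : K), (x - y) ^ q ^ m = x ^ q ^ m - y ^ q ^ m := by
    intro m x y
    rw [← hpk, ← pow_mul]
    exact sub_pow_char_pow x y (k * m)
  have hpow6 : ∀ a : K, a ^ q ^ 6 = a := by
    intro a
    rw [← hK]
    exact FiniteField.pow_card a
  -- basic numeric facts
  have hq3_8 : 8 ≤ q ^ 3 := by
    calc (8 : ℕ) = 2 ^ 3 := by norm_num
      _ ≤ q ^ 3 := Nat.pow_le_pow_left hq2 3
  have hq2pos : 0 < q ^ 2 := Nat.pow_pos (by omega)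
  have h34 : q ^ 3 + 1 < q ^ 4 + q := by
    have h2q : 2 * q ^ 3 ≤ q * q ^ 3 := Nat.mul_le_mul_right _ hq2
    have hqq : q * q ^ 3 = q ^ 4 := by ring
    linarith
  -- the subfield F_{q^3} and the prime field F_q as root sets
  set R3 : Finset K := Finset.univ.filter fun x : K => x ^ q ^ 3 = x with hR3
  set R1 : Finset K := Finset.univ.filter fun x : K => x ^ q = x with hR1
  have hcard3 : R3.card = q ^ 3 := by
    apply stmt19_aux_card_roots (by omega)
    rw [hK]
    have h := Nat.sub_dvd_pow_sub_pow (q ^ 3) 1 2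
    rw [one_pow, ← pow_mul] at h
    norm_num at h ⊢
    exact h
  have hcard1 : R1.card = q := by
    have h := stmt19_aux_card_roots (K := K) (m := q) (by omega) ?_
    · simpa [hR1] using h
    · rw [hK]
      have h := Nat.sub_dvd_pow_sub_pow q 1 6
      rw [one_pow] at h
      exact h
  -- norm map
  set N : K → K := fun a => a ^ (q ^ 3 + 1) with hN
  set f : K → K := fun x => x ^ q - x with hf
  have hNR3 : ∀ a : K, N a ∈ R3 := by
    intro a
    simp only [hR3, Finset.mem_filter, Finset.mem_univ, true_and, hN]
    rw [← pow_mul]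
    have e : (q ^ 3 + 1) * q ^ 3 = q ^ 6 + q ^ 3 := by ring
    rw [e, pow_add, hpow6, pow_succ]
    ring
  set M : Finset K := Finset.univ.image N with hM
  have hMsub : M ⊆ R3 := by
    intro b hb
    obtain ⟨a, -, rfl⟩ := Finset.mem_image.mp hb
    exact hNR3 a
  have hMcard : q ^ 3 ≤ M.card := by
    have hsum : (q : ℕ) ^ 6 ≤ M.card * (q ^ 3 + 1) := by
      have h1 : (q : ℕ) ^ 6 = ∑ b ∈ M, (Finset.univ.filter fun a : K => N a = b).card := by
        rw [← hK, ← Finset.card_univ]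
        exact Finset.card_eq_sum_card_image N Finset.univ
      have h2 : ∀ b ∈ M, (Finset.univ.filter fun a : K => N a = b).card ≤ q ^ 3 + 1 := by
        intro b _
        exact stmt19_aux_fiber_le (by omega) b
      calc (q : ℕ) ^ 6 = _ := h1
        _ ≤ ∑ _b ∈ M, (q ^ 3 + 1) := Finset.sum_le_sum h2
        _ = M.card * (q ^ 3 + 1) := by rw [Finset.sum_const, smul_eq_mul]
    by_contra hlt
    push_neg at hlt
    have h1 : M.card * (q ^ 3 + 1) ≤ (q ^ 3 - 1) * (q ^ 3 + 1) :=
      Nat.mul_le_mul_right _ (by omega)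
    have h2 : (q ^ 3 - 1) * (q ^ 3 + 1) + (q ^ 3 + 1) = q ^ 6 + q ^ 3 := by
      rw [← add_one_mul, Nat.sub_add_cancel (by omega)]
      ring
    linarith
  have hMR3 : M = R3 := Finset.eq_of_subset_of_card_le hMsub (by rw [hcard3]; exact hMcard)
  -- rewrite the value set
  have himg : (Finset.univ.image fun a => G.eval a) = R3.image f := by
    have h1 : (Finset.univ.image fun a => G.eval a) = Finset.univ.image (fun a : K => f (N a)) := by
      apply Finset.image_congr
      intro a _
      simp only [hG, hf, hN, eval_sub, eval_pow, eval_X, ← pow_mul]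
      congr 2
      ring
    rw [h1, ← hMR3, hM, Finset.image_image]
    rfl
  -- each fiber of f on R3 has exactly q elements
  have hsub13 : ∀ t : K, t ^ q = t → t ^ q ^ 3 = t := by
    intro t ht
    have e : q ^ 3 = q * q * q := by ring
    rw [e, pow_mul, pow_mul, ht, ht, ht]
  have hfiber : ∀ b ∈ R3.image f, (R3.filter fun x => f x = b).card = q := by
    intro b hb
    obtain ⟨x0, hx0, rfl⟩ := Finset.mem_image.mp hb
    have hx0' : x0 ^ q ^ 3 = x0 := by
      simpa [hR3] using hx0
    rw [← hcard1]
    symm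
    apply Finset.card_bij (fun t _ => x0 + t)
    · intro t ht
      have ht' : t ^ q = t := by simpa [hR1] using ht
      simp only [Finset.mem_filter, Finset.mem_univ, true_and, hR3, hf]
      constructor
      · rw [frobadd 3, hx0', hsub13 t ht']
      · have hxq : (x0 + t) ^ q = x0 ^ q + t ^ q := by
          have h := frobadd 1 x0 t
          simpa [pow_one] using h
        rw [hxq, ht']
        ring
    · intro a ha b hb hab
      exact add_left_cancel hab
    · intro x hx
      simp only [Finset.mem_filter, hR3, hf, Finset.mem_univ, true_and] at hx
      refine ⟨x - x0, ?_, by ring⟩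
      simp only [hR1, Finset.mem_filter, Finset.mem_univ, true_and]
      have h1 : (x - x0) ^ q = x ^ q - x0 ^ q := by
        have := frobsub 1 x x0
        simpa [pow_one] using this
      rw [h1]
      have := hx.2
      linear_combination this
  have hkey : (R3.image f).card * q = q ^ 3 := by
    have h := Finset.card_eq_sum_card_image f R3
    rw [hcard3, Finset.sum_congr rfl hfiber, Finset.sum_const, smul_eq_mul] at h
    omega
  have hIcard : (R3.image f).card = q ^ 2 := by
    have hq0 : 0 < q := by omega
    apply Nat.eq_of_mul_eq_mul_right hq0
    rw [hkey]
    ring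
  have hcardimg : (Finset.univ.image fun a => G.eval a).card = q ^ 2 := by
    rw [himg, hIcard]
  -- natDegree
  have hdeg : G.natDegree = q ^ 4 + q := by
    rw [hG, natDegree_sub_eq_left_of_natDegree_lt, natDegree_X_pow]
    rw [natDegree_X_pow, natDegree_X_pow]
    exact h34
  -- the division computation
  have hdiv1 : (q ^ 6 - 1) / (q ^ 4 + q) = q ^ 2 - 1 := by
    apply Nat.div_eq_of_lt_le
    · have hc : (q ^ 2 - 1) + 1 = q ^ 2 := Nat.sub_add_cancel hq2pos
      have heq : (q ^ 2 - 1) * (q ^ 4 + q) + (q ^ 4 + q) = q ^ 6 + q ^ 3 := by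
        rw [← add_one_mul, hc]; ring
      have h2 : (q ^ 2 - 1) * (q ^ 4 + q) < q ^ 6 := by linarith
      exact Nat.le_sub_one_of_lt h2
    · have hc : (q ^ 2 - 1) + 1 = q ^ 2 := Nat.sub_add_cancel hq2pos
      have heq : ((q ^ 2 - 1) + 1) * (q ^ 4 + q) = q ^ 6 + q ^ 3 := by
        rw [hc]; ring
      have h1 : q ^ 6 - 1 ≤ q ^ 6 := Nat.sub_le _ _
      have h3 : 0 < q ^ 3 := by positivity
      linarith
  have hdiv2 : (q ^ 6 - 1) / (q ^ 3 - 1) = q ^ 3 + 1 := by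
    have hd : (q ^ 3 - 1) + 1 = q ^ 3 := Nat.sub_add_cancel (by omega)
    have heq : (q ^ 3 - 1) * (q ^ 3 + 1) + (q ^ 3 + 1) = q ^ 6 + q ^ 3 := by
      rw [← add_one_mul, hd]; ring
    have heq2 : (q ^ 3 - 1) * (q ^ 3 + 1) = q ^ 6 - 1 := by
      have h5 : (q ^ 3 - 1) * (q ^ 3 + 1) + 1 = q ^ 6 := by linarith
      exact Nat.eq_sub_of_add_eq h5
    have hpos : 0 < q ^ 3 - 1 := by omega
    rw [← heq2, Nat.mul_div_cancel_left (q ^ 3 + 1) hpos]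
  refine ⟨?_, hcardimg, ?_, hdeg, ?_⟩
  · rw [hcardimg, hdeg, hdiv1, Nat.sub_add_cancel hq2pos]
  · intro a
    have e1 : G.eval a = (a ^ (q ^ 3 + 1)) ^ q - a ^ (q ^ 3 + 1) := by
      simp only [hG, eval_sub, eval_pow, eval_X, ← pow_mul]
      congr 2
      ring
    have e2 : (a ^ (q ^ 3 + 1)) ^ q ^ 3 = a ^ (q ^ 3 + 1) := by
      have := hNR3 a
      simpa [hR3, hN] using this
    rw [e1, frobsub 3, ← pow_mul, mul_comm (q : ℕ) (q ^ 3), pow_mul, e2]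
  · rw [hdiv2]
    exact h34
end
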